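/- arXiv:2112.12885 — 3 statements merged into one kernel-verified Lean document; each statement's English description precedes it below -/
import Mathlib

section
/- Let (G, B, m, w) be a weighted connected finite graph with boundary and Z a subset of the interior Ω. Then: (1) there is an eigenfunction u of λ_1(G, B, Z) with u ≥ 0; (2) any eigenfunction u of the Dirichlet-to-Neumann map on (G, B) with vanishing Dirichlet data on Z satisfying u|_B > 0 must be an eigenfunction for λ_1(G, B, Z). -/
/-
Common definitions for Steklov eigenvalues on weighted finite graphs with boundary,
following Yu-Yu, "Monotonicity of Steklov eigenvalues on graphs and applications".
-/

attribute [local instance] Classical.propDecidable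

noncomputable section

/-- The boundary inner product `⟨u,v⟩_A = ∑_{x ∈ A} u x * v x * m x`. -/
def bInner {V : Type*} [Fintype V] (A : Set V) (m : V → ℝ) (u v : V → ℝ) : ℝ :=
  ∑ x : V, if x ∈ A then u x * v x * m x else 0

/-- Total measure `m(A) = ∑_{x ∈ A} m x`. -/
def mTotal {V : Type*} [Fintype V] (A : Set V) (m : V → ℝ) : ℝ :=
  ∑ x : V, if x ∈ A then m x else 0

/-- The Dirichlet energy `⟨du,du⟩_G = ∑_{{x,y} ∈ E(G)} w x y * (u y - u x)^2`
(each edge counted once; the double sum counts each edge twice, whence the `/2`). -/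
def energy {V : Type*} [Fintype V] (G : SimpleGraph V) (w : V → V → ℝ) (u : V → ℝ) : ℝ :=
  (∑ x : V, ∑ y : V, if G.Adj x y then w x y * (u y - u x) ^ 2 else 0) / 2

/-- The weighted graph Laplacian `Δ_G f (x) = (1/m x) ∑_{y ∼ x} w x y * (f y - f x)`. -/
def lap {V : Type*} [Fintype V] (G : SimpleGraph V) (m : V → ℝ) (w : V → V → ℝ)
    (f : V → ℝ) (x : V) : ℝ :=
  (∑ y : V, if G.Adj x y then w x y * (f y - f x) else 0) / m x

/-- The `i`-th Steklov eigenvalue (1-indexed, listed with multiplicity) of the weighted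
graph `(G,B,m,w)` with boundary, via the Courant min-max characterization: the infimum
over `i`-dimensional spaces of functions (injecting into `ℝ^B` by restriction) of the
maximal Rayleigh quotient `⟨du,du⟩_G / ⟨u,u⟩_B`. -/
def steklov {V : Type*} [Fintype V] (G : SimpleGraph V) (B : Set V) (m : V → ℝ)
    (w : V → V → ℝ) (i : ℕ) : ℝ :=
  sInf {σ : ℝ | ∃ E : Submodule ℝ (V → ℝ), Module.finrank ℝ E = i ∧
    (∀ u ∈ E, (∀ x ∈ B, u x = 0) → u = 0) ∧
    ∀ u ∈ E, energy G w u ≤ σ * bInner B m u u}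

/-- `f` is a Steklov eigenfunction of `(G,B,m,w)` for the eigenvalue `σ`:
`f ≠ 0`, `Δ_G f = 0` on the interior, and `∂f/∂n = σ f` on `B`. -/
def IsSteklovEigenfun {V : Type*} [Fintype V] (G : SimpleGraph V) (B : Set V) (m : V → ℝ)
    (w : V → V → ℝ) (σ : ℝ) (f : V → ℝ) : Prop :=
  f ≠ 0 ∧ (∀ x, x ∉ B → lap G m w f x = 0) ∧ ∀ x ∈ B, -lap G m w f x = σ * f x

/-- `f` is a Steklov eigenfunction with vanishing Dirichlet boundary data on `Z`,
for the eigenvalue `lam`. -/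
def IsDirSteklovEigenfun {V : Type*} [Fintype V] (G : SimpleGraph V) (B Z : Set V)
    (m : V → ℝ) (w : V → V → ℝ) (lam : ℝ) (f : V → ℝ) : Prop :=
  f ≠ 0 ∧ (∀ x ∈ Z, f x = 0) ∧ (∀ x, x ∉ B → x ∉ Z → lap G m w f x = 0) ∧
    ∀ x ∈ B, -lap G m w f x = lam * f x

/-- The first Steklov eigenvalue with vanishing Dirichlet boundary data on `Z`:
`λ₁(G,B,Z) = inf { ⟨du,du⟩_G / ⟨u,u⟩_B : u|_B ≢ 0, u|_Z ≡ 0 }`. -/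
def lambda1 {V : Type*} [Fintype V] (G : SimpleGraph V) (B Z : Set V) (m : V → ℝ)
    (w : V → V → ℝ) : ℝ :=
  sInf {c : ℝ | ∃ u : V → ℝ, (∀ x ∈ Z, u x = 0) ∧ (∃ x ∈ B, u x ≠ 0) ∧
    c = energy G w u / bInner B m u u}

/-- The statement `λ₁(G,B,Z) ≥ c` (with the convention `λ₁ = +∞` when `B = ∅`):
every `u` vanishing on `Z` satisfies `c * ⟨u,u⟩_B ≤ ⟨du,du⟩_G`. -/
def lambda1Ge {V : Type*} [Fintype V] (G : SimpleGraph V) (B Z : Set V) (m : V → ℝ)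
    (w : V → V → ℝ) (c : ℝ) : Prop :=
  ∀ u : V → ℝ, (∀ x ∈ Z, u x = 0) → c * bInner B m u u ≤ energy G w u

/-- The intrinsic boundary of a combinatorial graph: vertices of degree at most one. -/
def combBoundary {V : Type*} (G : SimpleGraph V) : Set V :=
  {v | (G.neighborSet v).ncard ≤ 1}

/-- The tooth `G̃_x`: vertices of `G̃` reachable from `x` after deleting all edges
of the subgraph `H`. -/
def tooth {V : Type*} (Gt : SimpleGraph V) (H : Gt.Subgraph) (x : V) : Set V :=
  {y | (Gt.deleteEdges H.edgeSet).Reachable x y}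

/-- The tooth `G̃_x` as a graph in its own right. -/
def toothGraph {V : Type*} (Gt : SimpleGraph V) (H : Gt.Subgraph) (x : V) :
    SimpleGraph (tooth Gt H x) :=
  (Gt.deleteEdges H.edgeSet).induce (tooth Gt H x)

/-- `G̃` is a comb over its subgraph `H`: after deleting the edges of `H`, the graph
breaks into exactly `|V(H)|` connected components, one for each vertex of `H`. -/
def IsComb {V : Type*} (Gt : SimpleGraph V) (H : Gt.Subgraph) : Prop :=
  Function.Bijective fun x : H.verts =>
    (Gt.deleteEdges H.edgeSet).connectedComponentMk (x : V)

/-- The `i`-th Steklov eigenvalue of the subgraph `H` of `(G̃,m,w)` with boundary `B`,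
with the restricted vertex measure and edge weight. -/
def steklovSub {V : Type*} [Fintype V] (Gt : SimpleGraph V) (H : Gt.Subgraph) (B : Set V)
    (m : V → ℝ) (w : V → V → ℝ) (i : ℕ) : ℝ :=
  steklov H.coe (Subtype.val ⁻¹' B) (fun x => m x.1) (fun x y => w x.1 y.1) i

/-- The set `Z` of interior vertices of the subgraph `(H,B)` at which every function
that is harmonic in the interior and satisfies `⟨f,1⟩_B = 0` vanishes. -/
def Zset {V : Type*} [Fintype V] (Gt : SimpleGraph V) (H : Gt.Subgraph) (B : Set V)
    (m : V → ℝ) (w : V → V → ℝ) : Set H.verts :=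
  {x | (x : V) ∉ B ∧ ∀ f : H.verts → ℝ,
    (∀ y : H.verts, (y : V) ∉ B → lap H.coe (fun a => m a.1) (fun a b => w a.1 b.1) f y = 0) →
    bInner (Subtype.val ⁻¹' B) (fun a => m a.1) f (fun _ => 1) = 0 → f x = 0}

/-- The set `Z₁` of vertices of the subgraph `(H,B)` at which every Steklov
eigenfunction for `σ₂` vanishes. -/
def Z1set {V : Type*} [Fintype V] (Gt : SimpleGraph V) (H : Gt.Subgraph) (B : Set V)
    (m : V → ℝ) (w : V → V → ℝ) : Set H.verts :=
  {x | ∀ f : H.verts → ℝ,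
    IsSteklovEigenfun H.coe (Subtype.val ⁻¹' B) (fun a => m a.1) (fun a b => w a.1 b.1)
      (steklovSub Gt H B m w 2) f → f x = 0}

/-- Vertex type of the wedge sum `∨_z^r Γ` of `r` copies of `Γ` at `z`:
`r` copies of `V ∖ {z}` together with one common copy of `z` (the `Sum.inr` vertex). -/
abbrev wedgeV (V : Type*) (z : V) (r : ℕ) : Type _ := ({x : V // x ≠ z} × Fin r) ⊕ Unit

/-- The wedge sum `∨_z^r Γ` of `r` copies of the graph `Γ` at the vertex `z`. -/
def wedgeGraph {V : Type*} (Γ : SimpleGraph V) (z : V) (r : ℕ) :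
    SimpleGraph (wedgeV V z r) :=
  SimpleGraph.fromRel fun a b =>
    match a, b with
    | Sum.inl (x, i), Sum.inl (y, j) => i = j ∧ Γ.Adj x.1 y.1
    | Sum.inr _, Sum.inl (y, _) => Γ.Adj z y.1
    | _, _ => False

/-- The vertex measure on `∨_z^r Γ` inherited from `m`. -/
def wedgeM {V : Type*} (m : V → ℝ) (z : V) (r : ℕ) : wedgeV V z r → ℝ :=
  fun a => match a with
  | Sum.inl (x, _) => m x.1
  | Sum.inr _ => m z

/-- The edge weight on `∨_z^r Γ` inherited from `w`. -/
def wedgeW {V : Type*} (w : V → V → ℝ) (z : V) (r : ℕ) :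
    wedgeV V z r → wedgeV V z r → ℝ :=
  fun a b => match a, b with
  | Sum.inl (x, _), Sum.inl (y, _) => w x.1 y.1
  | Sum.inl (x, _), Sum.inr _ => w x.1 z
  | Sum.inr _, Sum.inl (y, _) => w z y.1
  | Sum.inr _, Sum.inr _ => 0

/-- The boundary `⊔^r B` of the wedge sum `∨_z^r Γ` (for `B` not containing `z`). -/
def wedgeB {V : Type*} (B : Set V) (z : V) (r : ℕ) : Set (wedgeV V z r) :=
  {a | match a with
      | Sum.inl (x, _) => x.1 ∈ B
      | Sum.inr _ => False}

/-- Vertex type of the star `St(l₀,…,l_{r-1})`: the vertex `Sum.inl ⟨j,k⟩` is the vertex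
on the `j`-th arm at distance `k+1` from the center, and `Sum.inr ()` is the center. -/
abbrev starV {r : ℕ} (l : Fin r → ℕ) : Type := (Σ j : Fin r, Fin (l j)) ⊕ Unit

/-- The star `St(l₀,…,l_{r-1})`: `r` paths of lengths `l₀,…,l_{r-1}` identified at one
end vertex (the center `Sum.inr ()`). -/
def starGraph {r : ℕ} (l : Fin r → ℕ) : SimpleGraph (starV l) :=
  SimpleGraph.fromRel fun a b =>
    match a, b with
    | Sum.inl ⟨j, k⟩, Sum.inl ⟨j', k'⟩ => j = j' ∧ k.1 + 1 = k'.1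
    | Sum.inr _, Sum.inl ⟨_, k⟩ => k.1 = 0
    | _, _ => False

/-- The vertex on the `j`-th arm of the star at distance `d` from the center
(the center itself when `d = 0`). -/
def starVertexAt {r : ℕ} (l : Fin r → ℕ) (j : Fin r) (d : ℕ) : starV l :=
  if h : 0 < d ∧ d - 1 < l j then Sum.inl ⟨j, ⟨d - 1, h.2⟩⟩ else Sum.inr ()

/-- The regular comb `Comb(r;l)`: a base path `(0,0) ∼ (1,0) ∼ ⋯ ∼ (r,0)` of length `r`,
with a tooth `(k,0) ∼ (k,1) ∼ ⋯ ∼ (k,l)` of length `l` attached at each base vertex. -/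
def combGraph (r l : ℕ) : SimpleGraph (Fin (r + 1) × Fin (l + 1)) :=
  SimpleGraph.fromRel fun a b =>
    (a.2.1 = 0 ∧ b.2.1 = 0 ∧ a.1.1 + 1 = b.1.1) ∨ (a.1 = b.1 ∧ a.2.1 + 1 = b.2.1)

end
section YuYuAux

open Finset

variable {V : Type*} [Fintype V]

noncomputable def ebil (G : SimpleGraph V) (w : V → V → ℝ) (u v : V → ℝ) : ℝ :=
  (∑ x : V, ∑ y : V, if G.Adj x y then w x y * (u y - u x) * (v y - v x) else 0) / 2

lemma ebil_symm (G : SimpleGraph V) (w : V → V → ℝ) (u v : V → ℝ) :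
    ebil G w u v = ebil G w v u := by
  unfold ebil
  congr 1
  refine Finset.sum_congr rfl fun x _ => Finset.sum_congr rfl fun y _ => ?_
  split_ifs <;> ring

lemma energy_eq_ebil (G : SimpleGraph V) (w : V → V → ℝ) (u : V → ℝ) :
    energy G w u = ebil G w u u := by
  unfold energy ebil
  congr 1
  refine Finset.sum_congr rfl fun x _ => Finset.sum_congr rfl fun y _ => ?_
  split_ifs <;> ring

lemma ebil_eq_sum_lap (G : SimpleGraph V) (m : V → ℝ) (w : V → V → ℝ)
    (hm : ∀ x, m x ≠ 0) (hw : ∀ x y, w x y = w y x) (u v : V → ℝ) :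
    ebil G w u v = ∑ x : V, (-lap G m w u x) * v x * m x := by
  have h1 : ∀ x y : V, (if G.Adj x y then w x y * (u y - u x) * (v y - v x) else 0)
      = -((if G.Adj y x then w y x * (u x - u y) else 0) * v y)
        - (if G.Adj x y then w x y * (u y - u x) else 0) * v x := by
    intro x y
    by_cases h : G.Adj x y
    · simp only [if_pos h, if_pos h.symm, hw y x]; ring
    · simp only [if_neg h, if_neg (fun h' : G.Adj y x => h h'.symm)]; ring
  have key2 : (∑ x : V, ∑ y : V, (if G.Adj y x then w y x * (u x - u y) else 0) * v y)
      = ∑ x : V, ∑ y : V, (if G.Adj x y then w x y * (u y - u x) else 0) * v x :=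
    Finset.sum_comm
  have hC : ebil G w u v
      = -∑ x : V, (∑ y : V, (if G.Adj x y then w x y * (u y - u x) else 0)) * v x := by
    unfold ebil
    simp only [h1, Finset.sum_sub_distrib, Finset.sum_neg_distrib, key2, Finset.sum_mul]
    ring
  rw [hC, ← Finset.sum_neg_distrib]
  refine Finset.sum_congr rfl fun x _ => ?_
  rw [lap]
  field_simp [hm x]

end YuYuAux
section YuYuAux2

open Finset

variable {V : Type*} [Fintype V]

lemma energy_expand (G : SimpleGraph V) (w : V → V → ℝ) (u v : V → ℝ) (t : ℝ) :
    energy G w (fun x => u x + t * v x)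
      = energy G w u + 2 * t * ebil G w u v + t ^ 2 * energy G w v := by
  have key : ∀ x y : V,
      (if G.Adj x y then w x y * ((u y + t * v y) - (u x + t * v x)) ^ 2 else 0)
      = (if G.Adj x y then w x y * (u y - u x) ^ 2 else 0)
        + (2 * t) * (if G.Adj x y then w x y * (u y - u x) * (v y - v x) else 0)
        + t ^ 2 * (if G.Adj x y then w x y * (v y - v x) ^ 2 else 0) := by
    intro x y; split_ifs <;> ring
  simp only [energy, ebil, key, Finset.sum_add_distrib, ← Finset.mul_sum]
  ring

lemma energy_smul (G : SimpleGraph V) (w : V → V → ℝ) (u : V → ℝ) (t : ℝ) :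
    energy G w (fun x => t * u x) = t ^ 2 * energy G w u := by
  have key : ∀ x y : V,
      (if G.Adj x y then w x y * (t * u y - t * u x) ^ 2 else 0)
      = t ^ 2 * (if G.Adj x y then w x y * (u y - u x) ^ 2 else 0) := by
    intro x y; split_ifs <;> ring
  simp only [energy, key, ← Finset.mul_sum]
  ring

lemma energy_nonneg (G : SimpleGraph V) (w : V → V → ℝ)
    (hw : ∀ x y, G.Adj x y → 0 < w x y) (u : V → ℝ) : 0 ≤ energy G w u := by
  apply div_nonneg _ (by norm_num)
  refine Finset.sum_nonneg fun x _ => Finset.sum_nonneg fun y _ => ?_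
  split_ifs with h
  · exact mul_nonneg (hw x y h).le (sq_nonneg _)
  · exact le_rfl

lemma energy_abs_le (G : SimpleGraph V) (w : V → V → ℝ)
    (hw : ∀ x y, G.Adj x y → 0 < w x y) (u : V → ℝ) :
    energy G w (fun x => |u x|) ≤ energy G w u := by
  have : (0:ℝ) ≤ 2 := by norm_num
  apply div_le_div_of_nonneg_right ?_ this
  refine Finset.sum_le_sum fun x _ => Finset.sum_le_sum fun y _ => ?_
  split_ifs with h
  · refine mul_le_mul_of_nonneg_left ?_ (hw x y h).le
    have a1 := abs_sub_abs_le_abs_sub (u y) (u x)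
    have a2 := abs_sub_abs_le_abs_sub (u x) (u y)
    have a3 : |u x - u y| = |u y - u x| := abs_sub_comm _ _
    nlinarith [abs_nonneg (u y - u x), sq_abs (u y - u x)]
  · exact le_rfl


lemma bInner_expand (B : Set V) (m : V → ℝ) (u v : V → ℝ) (t : ℝ) :
    bInner B m (fun x => u x + t * v x) (fun x => u x + t * v x)
      = bInner B m u u + 2 * t * bInner B m u v + t ^ 2 * bInner B m v v := by
  have key : ∀ x : V,
      (if x ∈ B then (u x + t * v x) * (u x + t * v x) * m x else 0)
      = (if x ∈ B then u x * u x * m x else 0)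
        + (2 * t) * (if x ∈ B then u x * v x * m x else 0)
        + t ^ 2 * (if x ∈ B then v x * v x * m x else 0) := by
    intro x; split_ifs <;> ring
  simp only [bInner, key, Finset.sum_add_distrib, ← Finset.mul_sum]

lemma bInner_smul (B : Set V) (m : V → ℝ) (u : V → ℝ) (t : ℝ) :
    bInner B m (fun x => t * u x) (fun x => t * u x) = t ^ 2 * bInner B m u u := by
  have key : ∀ x : V,
      (if x ∈ B then (t * u x) * (t * u x) * m x else 0)
      = t ^ 2 * (if x ∈ B then u x * u x * m x else 0) := by
    intro x; split_ifs <;> ring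
  simp only [bInner, key, ← Finset.mul_sum]

lemma bInner_symm (B : Set V) (m : V → ℝ) (u v : V → ℝ) :
    bInner B m u v = bInner B m v u := by
  unfold bInner
  refine Finset.sum_congr rfl fun x _ => ?_
  split_ifs <;> ring

lemma bInner_nonneg (B : Set V) (m : V → ℝ) (hm : ∀ x, 0 < m x) (u : V → ℝ) :
    0 ≤ bInner B m u u :=
  Finset.sum_nonneg fun x _ => by
    split_ifs
    · exact mul_nonneg (mul_self_nonneg _) (hm x).le
    · exact le_rfl

lemma bInner_pos (B : Set V) (m : V → ℝ) (hm : ∀ x, 0 < m x) (u : V → ℝ)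
    (x₀ : V) (hx₀ : x₀ ∈ B) (hu : u x₀ ≠ 0) : 0 < bInner B m u u := by
  refine Finset.sum_pos' (fun x _ => ?_) ⟨x₀, Finset.mem_univ _, ?_⟩
  · split_ifs
    · exact mul_nonneg (mul_self_nonneg _) (hm x).le
    · exact le_rfl
  · rw [if_pos hx₀]
    exact mul_pos (mul_self_pos.2 hu) (hm x₀)

lemma bInner_ne_zero_exists (B : Set V) (m : V → ℝ) (u : V → ℝ)
    (h : bInner B m u u ≠ 0) : ∃ x ∈ B, u x ≠ 0 := by
  by_contra hc
  push_neg at hc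
  apply h
  refine Finset.sum_eq_zero fun x _ => ?_
  split_ifs with hx
  · rw [hc x hx]; ring
  · rfl

lemma bInner_single (B : Set V) (m : V → ℝ) (u : V → ℝ) (x₀ : V) :
    bInner B m u (fun y => if y = x₀ then 1 else 0)
      = if x₀ ∈ B then u x₀ * m x₀ else 0 := by
  unfold bInner
  rw [Finset.sum_eq_single x₀]
  · simp
  · intro y _ hy
    simp [hy]
  · simp

lemma sum_lap_single (g : V → ℝ) (m : V → ℝ) (x₀ : V) :
    (∑ x : V, g x * (fun y => if y = x₀ then 1 else 0) x * m x) = g x₀ * m x₀ := by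
  rw [Finset.sum_eq_single x₀]
  · simp
  · intro y _ hy
    simp [hy]
  · simp

end YuYuAux2
section YuYuAux3

open Finset

variable {V : Type*} [Fintype V]

lemma walk_const {V : Type*} {G : SimpleGraph V} {u : V → ℝ}
    (h : ∀ a b, G.Adj a b → u a = u b) {x y : V} (p : G.Walk x y) : u x = u y := by
  induction p with
  | nil => rfl
  | cons ha _ ih => exact (h _ _ ha).trans ih

lemma energy_zero_const (G : SimpleGraph V) (w : V → V → ℝ)
    (hw : ∀ x y, G.Adj x y → 0 < w x y) (hconn : G.Connected) (u : V → ℝ)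
    (h : energy G w u = 0) : ∀ x y : V, u x = u y := by
  have hsum : (∑ x : V, ∑ y : V, if G.Adj x y then w x y * (u y - u x) ^ 2 else 0) = 0 := by
    unfold energy at h
    field_simp at h
    linarith
  have hterm : ∀ x y : V, (if G.Adj x y then w x y * (u y - u x) ^ 2 else 0) = 0 := by
    have h1 := (Finset.sum_eq_zero_iff_of_nonneg (fun x _ => Finset.sum_nonneg fun y _ => by
      split_ifs with hxy
      · exact mul_nonneg (hw x y hxy).le (sq_nonneg _)
      · exact le_rfl)).1 hsum
    intro x y
    have h2 := (Finset.sum_eq_zero_iff_of_nonneg (fun y _ => by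
      split_ifs with hxy
      · exact mul_nonneg (hw x y hxy).le (sq_nonneg _)
      · exact le_rfl)).1 (h1 x (Finset.mem_univ x))
    exact h2 y (Finset.mem_univ y)
  have hadj : ∀ a b : V, G.Adj a b → u a = u b := by
    intro a b hab
    have := hterm a b
    rw [if_pos hab] at this
    have h2 : (u b - u a) ^ 2 = 0 := by
      rcases mul_eq_zero.1 this with h' | h'
      · exact absurd h' (hw a b hab).ne'
      · exact h'
    have := pow_eq_zero_iff (n := 2) (by norm_num) |>.1 h2
    linarith [sub_eq_zero.1 this]
  intro x y
  exact walk_const hadj ((hconn x y).some)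

lemma continuous_energy (G : SimpleGraph V) (w : V → V → ℝ) :
    Continuous fun u : V → ℝ => energy G w u := by
  unfold energy
  apply Continuous.div_const
  refine continuous_finset_sum _ fun x _ => continuous_finset_sum _ fun y _ => ?_
  by_cases h : G.Adj x y
  · simp only [if_pos h]; fun_prop
  · simp only [if_neg h]; fun_prop

lemma continuous_bInner (B : Set V) (m : V → ℝ) :
    Continuous fun u : V → ℝ => bInner B m u u := by
  unfold bInner
  refine continuous_finset_sum _ fun x _ => ?_
  by_cases h : x ∈ B
  · simp only [if_pos h]; fun_prop
  · simp only [if_neg h]; fun_prop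

lemma quad_nonneg_linear_zero (a c : ℝ) (h : ∀ t : ℝ, 0 ≤ a * t ^ 2 + c * t) : c = 0 := by
  by_contra hc
  have hεpos : (0:ℝ) < 1 / (|a| + 1) := by positivity
  have h1 := h (-c * (1 / (|a| + 1)))
  have habs : a ≤ |a| := le_abs_self a
  have hcsq : 0 < c * c := mul_self_pos.2 hc
  have hkey : |a| * (1 / (|a| + 1)) < 1 := by
    rw [mul_one_div, div_lt_one (by positivity)]
    linarith
  nlinarith [mul_pos hcsq hεpos, sq_nonneg c, abs_nonneg a]

end YuYuAux3
section YuYuAux4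

open Finset

variable {V : Type*} [Fintype V]

lemma energy_const (G : SimpleGraph V) (w : V → V → ℝ) (c : ℝ) :
    energy G w (fun _ => c) = 0 := by
  simp [energy]

lemma bInner_zero (B : Set V) (m : V → ℝ) :
    bInner B m (fun _ => (0:ℝ)) (fun _ => (0:ℝ)) = 0 := by
  simp [bInner]

/-- Existence of a normalized minimizer together with the global lower bound. -/
lemma exists_min_pair (G : SimpleGraph V) (B Z : Set V) (m : V → ℝ) (w : V → V → ℝ)
    (hm : ∀ x, 0 < m x)
    (hw_pos : ∀ x y, G.Adj x y → 0 < w x y)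
    (hconn : G.Connected) (hB : B.Nonempty)
    (hZ : ∀ x ∈ Z, x ∉ B) :
    ∃ (lam0 : ℝ) (u : V → ℝ), (∀ x ∈ Z, u x = 0) ∧ bInner B m u u = 1 ∧
      energy G w u = lam0 ∧
      ∀ v : V → ℝ, (∀ x ∈ Z, v x = 0) → lam0 * bInner B m v v ≤ energy G w v := by
  obtain ⟨x₀, hx₀⟩ := hB
  have hx₀Z : x₀ ∉ Z := fun h => hZ x₀ h hx₀
  rcases Set.eq_empty_or_nonempty Z with hZe | ⟨z₀, hz₀⟩
  · -- Z empty : constant functions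
    set sB := bInner B m (fun _ => (1:ℝ)) (fun _ => (1:ℝ)) with hsBdef
    have hsB : 0 < sB := bInner_pos B m hm _ x₀ hx₀ one_ne_zero
    have hsq : Real.sqrt sB ^ 2 = sB := Real.sq_sqrt hsB.le
    have hsne : Real.sqrt sB ≠ 0 := by positivity
    refine ⟨0, fun _ => (Real.sqrt sB)⁻¹ * 1, ?_, ?_, ?_, ?_⟩
    · intro x hx; rw [hZe] at hx; exact absurd hx (Set.notMem_empty x)
    · rw [bInner_smul B m (fun _ => (1:ℝ)) ((Real.sqrt sB)⁻¹), ← hsBdef]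
      field_simp
      exact hsq.symm
    · rw [energy_smul G w (fun _ => (1:ℝ)), energy_const]; ring
    · intro v _
      rw [zero_mul]
      exact energy_nonneg G w hw_pos v
  · -- Z nonempty : compactness argument
    -- positive definiteness
    have hpd : ∀ u : V → ℝ, (∀ x ∈ Z, u x = 0) → energy G w u = 0 → u = 0 := by
      intro u huZ hE
      funext x
      have := energy_zero_const G w hw_pos hconn u hE x z₀
      rw [Pi.zero_apply, this, huZ z₀ hz₀]
    -- the closed condition of vanishing on Z
    have hWclosed : IsClosed {u : V → ℝ | ∀ x ∈ Z, u x = 0} := by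
      have : {u : V → ℝ | ∀ x ∈ Z, u x = 0} = ⋂ x ∈ Z, {u : V → ℝ | u x = 0} := by
        ext u; simp
      rw [this]
      exact isClosed_biInter fun x _ => isClosed_eq (continuous_apply x) continuous_const
    -- the unit sphere inside W is compact
    set S := {u : V → ℝ | (∀ x ∈ Z, u x = 0) ∧ ‖u‖ = 1} with hSdef
    have hSclosed : IsClosed S :=
      hWclosed.inter (isClosed_eq continuous_norm continuous_const)
    have hSbdd : Bornology.IsBounded S := by
      refine (Metric.isBounded_closedBall (x := (0 : V → ℝ)) (r := 1)).subset ?_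
      intro u hu
      exact Metric.mem_closedBall.2 (by rw [dist_zero_right, hu.2])
    have hScompact : IsCompact S := Metric.isCompact_of_isClosed_isBounded hSclosed hSbdd
    -- S is nonempty
    have hδZ : ∀ x ∈ Z, (fun y => if y = x₀ then (1:ℝ) else 0) x = 0 := by
      intro x hx
      have : x ≠ x₀ := fun h => hx₀Z (h ▸ hx)
      simp [this]
    have hδne : (fun y => if y = x₀ then (1:ℝ) else 0) ≠ 0 := by
      intro h
      have := congrFun h x₀
      simp at this
    have hSne : S.Nonempty := by
      set δ : V → ℝ := fun y => if y = x₀ then (1:ℝ) else 0 with hδdef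
      have hnδ : ‖δ‖ ≠ 0 := norm_ne_zero_iff.2 hδne
      refine ⟨‖δ‖⁻¹ • δ, fun x hx => ?_, ?_⟩
      · show ‖δ‖⁻¹ * δ x = 0
        rw [hδZ x hx, mul_zero]
      · rw [norm_smul, norm_inv, norm_norm, inv_mul_cancel₀ hnδ]
    -- minimum of energy on S
    obtain ⟨umin, huminS, hminS⟩ :=
      hScompact.exists_isMinOn hSne (continuous_energy G w).continuousOn
    set ε := energy G w umin with hεdef
    have hε : 0 < ε := by
      rcases lt_or_eq_of_le (energy_nonneg G w hw_pos umin) with h | h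
      · exact h
      · exfalso
        have h0 : umin = 0 := hpd umin huminS.1 h.symm
        have := huminS.2
        rw [h0, norm_zero] at this
        norm_num at this
    -- coercivity
    have hcoerc : ∀ u : V → ℝ, (∀ x ∈ Z, u x = 0) → ε * ‖u‖ ^ 2 ≤ energy G w u := by
      intro u huZ
      by_cases hu : u = 0
      · rw [hu]
        simp [energy]
      · have hnu : ‖u‖ ≠ 0 := norm_ne_zero_iff.2 hu
        have hmem : (‖u‖⁻¹ • u) ∈ S := by
          refine ⟨fun x hx => ?_, ?_⟩
          · show ‖u‖⁻¹ * u x = 0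
            rw [huZ x hx, mul_zero]
          · rw [norm_smul, norm_inv, norm_norm, inv_mul_cancel₀ hnu]
        have h1 : ε ≤ energy G w (‖u‖⁻¹ • u) := hminS hmem
        have h2 : energy G w (‖u‖⁻¹ • u) = ‖u‖⁻¹ ^ 2 * energy G w u := by
          have : (‖u‖⁻¹ • u) = fun y => ‖u‖⁻¹ * u y := rfl
          rw [this, energy_smul]
        rw [h2] at h1
        have h3 := mul_le_mul_of_nonneg_right h1 (sq_nonneg ‖u‖)
        have h4 : ‖u‖⁻¹ ^ 2 * energy G w u * ‖u‖ ^ 2 = energy G w u := by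
          field_simp
        rw [h4] at h3
        linarith [mul_comm ε (‖u‖ ^ 2)]
    -- the base point u₀ with b u₀ = 1
    set δ : V → ℝ := fun y => if y = x₀ then (1:ℝ) else 0 with hδdef
    have hbδ : bInner B m δ δ = m x₀ := by
      have := bInner_single B m δ x₀
      rw [if_pos hx₀] at this
      rw [this]
      simp [hδdef]
    have hmx₀ : (0:ℝ) < m x₀ := hm x₀
    set c₀ := (Real.sqrt (m x₀))⁻¹ with hc₀def
    set u₀ : V → ℝ := fun y => c₀ * δ y with hu₀def
    have hbu₀ : bInner B m u₀ u₀ = 1 := by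
      rw [hu₀def, bInner_smul B m δ c₀, hbδ, hc₀def]
      rw [inv_pow, Real.sq_sqrt hmx₀.le, inv_mul_cancel₀ hmx₀.ne']
    have hu₀Z : ∀ x ∈ Z, u₀ x = 0 := by
      intro x hx
      rw [hu₀def]
      show c₀ * δ x = 0
      rw [hδZ x hx, mul_zero]
    set A := energy G w u₀ with hAdef
    -- the compact set K
    set K := {u : V → ℝ | (∀ x ∈ Z, u x = 0) ∧ bInner B m u u = 1 ∧ energy G w u ≤ A}
      with hKdef
    have hKclosed : IsClosed K := by
      refine hWclosed.inter (IsClosed.inter ?_ ?_)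
      · exact isClosed_eq (continuous_bInner B m) continuous_const
      · exact isClosed_le (continuous_energy G w) continuous_const
    have hKbdd : Bornology.IsBounded K := by
      refine (Metric.isBounded_closedBall (x := (0 : V → ℝ))
        (r := Real.sqrt (A / ε))).subset ?_
      intro u hu
      have h1 : ε * ‖u‖ ^ 2 ≤ A := le_trans (hcoerc u hu.1) hu.2.2
      have h2 : ‖u‖ ^ 2 ≤ A / ε := (le_div_iff₀ hε).2 (by linarith [mul_comm ε (‖u‖ ^ 2)])
      have h3 : ‖u‖ ≤ Real.sqrt (A / ε) := by
        rw [show ‖u‖ = Real.sqrt (‖u‖ ^ 2) by rw [Real.sqrt_sq (norm_nonneg u)]]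
        exact Real.sqrt_le_sqrt h2
      exact Metric.mem_closedBall.2 (by rw [dist_zero_right]; exact h3)
    have hKcompact : IsCompact K := Metric.isCompact_of_isClosed_isBounded hKclosed hKbdd
    have hKne : K.Nonempty := ⟨u₀, hu₀Z, hbu₀, le_rfl⟩
    obtain ⟨u, huK, hminK⟩ :=
      hKcompact.exists_isMinOn hKne (continuous_energy G w).continuousOn
    refine ⟨energy G w u, u, huK.1, huK.2.1, rfl, ?_⟩
    -- global lower bound
    intro v hvZ
    have hbvnn := bInner_nonneg B m hm v
    rcases lt_or_eq_of_le hbvnn with hbv | hbv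
    · set s := Real.sqrt (bInner B m v v) with hsdef
      have hs : 0 < s := Real.sqrt_pos.2 hbv
      have hs2 : s ^ 2 = bInner B m v v := Real.sq_sqrt hbv.le
      set v' : V → ℝ := fun y => s⁻¹ * v y with hv'def
      have hbv' : bInner B m v' v' = 1 := by
        rw [hv'def, bInner_smul, inv_pow, hs2, inv_mul_cancel₀ hbv.ne']
      have hv'Z : ∀ x ∈ Z, v' x = 0 := by
        intro x hx; rw [hv'def]; show s⁻¹ * v x = 0; rw [hvZ x hx, mul_zero]
      have hEv' : energy G w v' = s⁻¹ ^ 2 * energy G w v := by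
        rw [hv'def, energy_smul]
      have hle : energy G w u ≤ energy G w v' := by
        by_cases hA : energy G w v' ≤ A
        · exact hminK ⟨hv'Z, hbv', hA⟩
        · have h1 : energy G w u ≤ A := hminK ⟨hu₀Z, hbu₀, le_rfl⟩
          linarith
      rw [hEv'] at hle
      have h2 := mul_le_mul_of_nonneg_right hle hbvnn
      have h3 : s⁻¹ ^ 2 * energy G w v * bInner B m v v = energy G w v := by
        rw [← hs2]
        field_simp
      rw [h3] at h2
      exact h2
    · rw [← hbv, mul_zero]
      exact energy_nonneg G w hw_pos v
end YuYuAux4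
section YuYuAux5

open Finset

variable {V : Type*} [Fintype V]

/-- summation by parts against eigen-equations -/
lemma pairing (G : SimpleGraph V) (B Z : Set V) (m : V → ℝ) (w : V → V → ℝ)
    (hm : ∀ x, 0 < m x) (hw_symm : ∀ x y, w x y = w y x)
    (mu : ℝ) (f g : V → ℝ) (hgZ : ∀ x ∈ Z, g x = 0)
    (hint : ∀ x, x ∉ B → x ∉ Z → lap G m w f x = 0)
    (hbd : ∀ x ∈ B, -lap G m w f x = mu * f x) :
    ebil G w f g = mu * bInner B m f g := by
  rw [ebil_eq_sum_lap G m w (fun x => (hm x).ne') hw_symm, bInner, Finset.mul_sum]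
  refine Finset.sum_congr rfl fun x _ => ?_
  by_cases hxB : x ∈ B
  · rw [if_pos hxB, hbd x hxB]; ring
  · rw [if_neg hxB, mul_zero]
    by_cases hxZ : x ∈ Z
    · rw [hgZ x hxZ]; ring
    · rw [hint x hxB hxZ]; ring

/-- There is a nonnegative eigenfunction of `lambda1` not vanishing identically on `B`. -/
lemma exists_good_eigenfun (G : SimpleGraph V) (B Z : Set V) (m : V → ℝ) (w : V → V → ℝ)
    (hm : ∀ x, 0 < m x)
    (hw_symm : ∀ x y, w x y = w y x)
    (hw_pos : ∀ x y, G.Adj x y → 0 < w x y)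
    (hconn : G.Connected) (hB : B.Nonempty)
    (hZ : ∀ x ∈ Z, x ∉ B) :
    ∃ u : V → ℝ, IsDirSteklovEigenfun G B Z m w (lambda1 G B Z m w) u ∧
      (∀ x, 0 ≤ u x) ∧ ∃ x ∈ B, u x ≠ 0 := by
  obtain ⟨lam0, u₁, hu₁Z, hbu₁, hEu₁, hP2⟩ :=
    exists_min_pair G B Z m w hm hw_pos hconn hB hZ
  -- lam0 is the infimum lambda1
  have hlam : lambda1 G B Z m w = lam0 := by
    have hleast : IsLeast {c : ℝ | ∃ u : V → ℝ, (∀ x ∈ Z, u x = 0) ∧ (∃ x ∈ B, u x ≠ 0) ∧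
        c = energy G w u / bInner B m u u} lam0 := by
      constructor
      · refine ⟨u₁, hu₁Z, bInner_ne_zero_exists B m u₁ (by rw [hbu₁]; exact one_ne_zero), ?_⟩
        rw [hbu₁, hEu₁, div_one]
      · rintro c ⟨u', hu'Z, ⟨x', hx'B, hx'⟩, rfl⟩
        have hb' : 0 < bInner B m u' u' := bInner_pos B m hm u' x' hx'B hx'
        rw [le_div_iff₀ hb']
        exact hP2 u' hu'Z
    rw [lambda1, hleast.csInf_eq]
  -- pass to the absolute value
  set u : V → ℝ := fun x => |u₁ x| with hudef
  have huZ : ∀ x ∈ Z, u x = 0 := fun x hx => by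
    rw [hudef]; show |u₁ x| = 0; rw [hu₁Z x hx, abs_zero]
  have hbu : bInner B m u u = 1 := by
    rw [← hbu₁]
    refine Finset.sum_congr rfl fun x _ => ?_
    split_ifs with h
    · show |u₁ x| * |u₁ x| * m x = u₁ x * u₁ x * m x
      rw [abs_mul_abs_self]
    · rfl
  have hEu : energy G w u = lam0 := by
    have h1 : energy G w u ≤ lam0 := by
      rw [← hEu₁]; exact energy_abs_le G w hw_pos u₁
    have h2 : lam0 ≤ energy G w u := by
      have := hP2 u huZ
      rw [hbu, mul_one] at this
      exact this
    linarith
  -- Euler-Lagrange at each vertex x₁ ∉ Z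
  have hEL : ∀ x₁ : V, x₁ ∉ Z →
      -lap G m w u x₁ * m x₁ = lam0 * (if x₁ ∈ B then u x₁ * m x₁ else 0) := by
    intro x₁ hx₁Z
    set δ : V → ℝ := fun y => if y = x₁ then (1:ℝ) else 0 with hδdef
    have hδZ : ∀ x ∈ Z, δ x = 0 := by
      intro x hx
      have : x ≠ x₁ := fun h => hx₁Z (h ▸ hx)
      show (if x = x₁ then (1:ℝ) else 0) = 0
      rw [if_neg this]
    have key : ∀ t : ℝ,
        0 ≤ (energy G w δ - lam0 * bInner B m δ δ) * t ^ 2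
          + (2 * (ebil G w u δ - lam0 * bInner B m u δ)) * t := by
      intro t
      have h := hP2 (fun y => u y + t * δ y) (fun x hx => by
        show u x + t * δ x = 0
        rw [huZ x hx, hδZ x hx]; ring)
      rw [energy_expand, bInner_expand, hbu, hEu] at h
      nlinarith [h]
    have hc := quad_nonneg_linear_zero _ _ key
    have hEL0 : ebil G w u δ = lam0 * bInner B m u δ := by linarith
    have he : ebil G w u δ = -lap G m w u x₁ * m x₁ := by
      rw [ebil_eq_sum_lap G m w (fun x => (hm x).ne') hw_symm]
      exact sum_lap_single (fun x => -lap G m w u x) m x₁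
    have hb : bInner B m u δ = if x₁ ∈ B then u x₁ * m x₁ else 0 := bInner_single B m u x₁
    rw [he, hb] at hEL0
    exact hEL0
  have hune : u ≠ 0 := by
    intro h
    rw [h] at hbu
    simp [bInner] at hbu
  refine ⟨u, ?_, fun x => abs_nonneg _, bInner_ne_zero_exists B m u (by rw [hbu]; exact one_ne_zero)⟩
  rw [hlam]
  refine ⟨hune, huZ, ?_, ?_⟩
  · intro x hxB hxZ
    have := hEL x hxZ
    rw [if_neg hxB] at this
    have h2 : -lap G m w u x * m x = 0 := by rw [this, mul_zero]
    rcases mul_eq_zero.1 h2 with h | h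
    · linarith [neg_eq_zero.1 h]
    · exact absurd h (hm x).ne'
  · intro x hxB
    have hxZ : x ∉ Z := fun h => hZ x h hxB
    have := hEL x hxZ
    rw [if_pos hxB] at this
    have h2 : -lap G m w u x * m x = lam0 * u x * m x := by rw [this]; ring
    exact mul_right_cancel₀ (hm x).ne' h2

end YuYuAux5
/-- **Lemma 4.2.** Let `(G,B,m,w)` be a weighted connected finite graph with (nonempty)
boundary and `Z ⊆ Ω` a set of interior vertices. Then (1) there is an eigenfunction `u`
of `λ₁(G,B,Z)` with `u ≥ 0`, and (2) any eigenfunction `u` of the DtN map with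
vanishing Dirichlet data on `Z` satisfying `u|_B > 0` is an eigenfunction for
`λ₁(G,B,Z)`. -/
theorem dirichlet_steklov_first_eigenvalue
    {V : Type*} [Fintype V] (G : SimpleGraph V) (B Z : Set V)
    (m : V → ℝ) (w : V → V → ℝ)
    (hm : ∀ x, 0 < m x)
    (hw_symm : ∀ x y, w x y = w y x)
    (hw_pos : ∀ x y, G.Adj x y → 0 < w x y)
    (hconn : G.Connected) (hB : B.Nonempty)
    (hZ : ∀ x ∈ Z, x ∉ B) :
    (∃ u : V → ℝ,
      IsDirSteklovEigenfun G B Z m w (lambda1 G B Z m w) u ∧ ∀ x, 0 ≤ u x) ∧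
    (∀ (lam : ℝ) (u : V → ℝ), IsDirSteklovEigenfun G B Z m w lam u →
      (∀ x ∈ B, 0 < u x) → IsDirSteklovEigenfun G B Z m w (lambda1 G B Z m w) u) := by
  obtain ⟨v, hv, hvnn, x₁, hx₁B, hx₁⟩ :=
    exists_good_eigenfun G B Z m w hm hw_symm hw_pos hconn hB hZ
  refine ⟨⟨v, hv, hvnn⟩, ?_⟩
  intro lam u hu hupos
  have e1 : ebil G w u v = lam * bInner B m u v :=
    pairing G B Z m w hm hw_symm lam u v hv.2.1 hu.2.2.1 hu.2.2.2
  have e2 : ebil G w v u = lambda1 G B Z m w * bInner B m v u :=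
    pairing G B Z m w hm hw_symm _ v u hu.2.1 hv.2.2.1 hv.2.2.2
  have key : lam * bInner B m u v = lambda1 G B Z m w * bInner B m u v := by
    rw [← e1, ebil_symm, e2, bInner_symm B m v u]
  have hp : 0 < bInner B m u v := by
    refine Finset.sum_pos' (fun x _ => ?_) ⟨x₁, Finset.mem_univ _, ?_⟩
    · split_ifs with h
      · exact mul_nonneg (mul_nonneg (hupos x h).le (hvnn x)) (hm x).le
      · exact le_rfl
    · rw [if_pos hx₁B]
      exact mul_pos (mul_pos (hupos x₁ hx₁B) ((hvnn x₁).lt_of_ne (Ne.symm hx₁))) (hm x₁)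
  have hlameq : lam = lambda1 G B Z m w := mul_right_cancel₀ hp.ne' key
  exact hlameq ▸ hu
end

section
/- For r ≥ 2 and l ≥ 1, the regular star St(r;l) satisfies σ_2(St(r;l)) = σ_3(St(r;l)) = … = σ_r(St(r;l)) = 1/l. -/
/-
Common definitions for Steklov eigenvalues on weighted finite graphs with boundary,
following Yu-Yu, "Monotonicity of Steklov eigenvalues on graphs and applications".
-/

attribute [local instance] Classical.propDecidable

namespace RegStar

open Finset

attribute [local instance] Classical.propDecidable

variable {r l : ℕ}

/-- The vertex on arm `j` at index `k` (distance `k+1` from center). -/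
abbrev av (j : Fin r) (k : Fin l) : starV (fun _ : Fin r => l) := Sum.inl ⟨j, k⟩

/-- The center. -/
abbrev cen : starV (fun _ : Fin r => l) := Sum.inr ()

lemma av_injEq {j j' : Fin r} {k k' : Fin l} :
    (av j k = av j' k') ↔ j = j' ∧ k = k' := by
  constructor
  · intro h
    have h' := Sum.inl.inj h
    obtain ⟨h1, h2⟩ := Sigma.mk.inj_iff.mp h'
    exact ⟨h1, by cases h1; exact eq_of_heq h2⟩
  · rintro ⟨rfl, rfl⟩; rfl

lemma av_ne_cen {j : Fin r} {k : Fin l} : av j k ≠ cen := by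
  simp [av, cen]

lemma adj_av_av {j j' : Fin r} {k k' : Fin l} :
    (starGraph fun _ : Fin r => l).Adj (av j k) (av j' k') ↔
      j = j' ∧ (k.1 + 1 = k'.1 ∨ k'.1 + 1 = k.1) := by
  rw [starGraph, SimpleGraph.fromRel_adj]
  show (¬ av j k = av j' k') ∧ ((j = j' ∧ k.1 + 1 = k'.1) ∨ (j' = j ∧ k'.1 + 1 = k.1)) ↔ _
  rw [av_injEq]
  constructor
  · rintro ⟨hne, h | h⟩
    · exact ⟨h.1, Or.inl h.2⟩
    · exact ⟨h.1.symm, Or.inr h.2⟩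
  · rintro ⟨rfl, h | h⟩
    · exact ⟨fun hc => by have : k.1 = k'.1 := congrArg Fin.val hc.2; omega,
        Or.inl ⟨rfl, h⟩⟩
    · exact ⟨fun hc => by have : k.1 = k'.1 := congrArg Fin.val hc.2; omega,
        Or.inr ⟨rfl, h⟩⟩

lemma adj_cen_av {j : Fin r} {k : Fin l} :
    (starGraph fun _ : Fin r => l).Adj cen (av j k) ↔ k.1 = 0 := by
  rw [starGraph, SimpleGraph.fromRel_adj]
  show (¬ cen = av j k) ∧ (k.1 = 0 ∨ False) ↔ _
  simp [cen, av]

lemma adj_av_cen {j : Fin r} {k : Fin l} :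
    (starGraph fun _ : Fin r => l).Adj (av j k) cen ↔ k.1 = 0 := by
  rw [SimpleGraph.adj_comm]; exact adj_cen_av

lemma not_adj_cen_cen : ¬ (starGraph fun _ : Fin r => l).Adj cen cen :=
  fun h => (starGraph fun _ : Fin r => l).loopless.irrefl _ h

end RegStar
namespace RegStar

open Finset

attribute [local instance] Classical.propDecidable

variable {r l : ℕ}

lemma mem_combBoundary_iff {V : Type*} (G : SimpleGraph V) (x : V) :
    x ∈ combBoundary G ↔ (G.neighborSet x).ncard ≤ 1 := Iff.rfl

lemma tip_mem_B (hl : 1 ≤ l) (j : Fin r) :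
    av j ⟨l - 1, by omega⟩ ∈ combBoundary (starGraph fun _ : Fin r => l) := by
  rw [mem_combBoundary_iff]
  set p : starV (fun _ : Fin r => l) :=
    if h : l = 1 then cen else av j ⟨l - 2, by omega⟩ with hp
  have hsub : (starGraph fun _ : Fin r => l).neighborSet (av j ⟨l - 1, by omega⟩) ⊆ {p} := by
    intro y hy
    rw [SimpleGraph.mem_neighborSet] at hy
    rcases y with ⟨j', k'⟩ | u
    · rw [show (Sum.inl ⟨j', k'⟩ : starV (fun _ : Fin r => l)) = av j' k' from rfl] at hy
      rw [adj_av_av] at hy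
      obtain ⟨rfl, h | h⟩ := hy
      · exact absurd h (by have := k'.2; simp at h ⊢; omega)
      · have hl2 : 2 ≤ l := by have := k'.2; simp at h; omega
        have hpv : p = av j ⟨l - 2, by omega⟩ := by rw [hp]; simp [show ¬ l = 1 by omega]
        have hk' : k' = (⟨l - 2, by omega⟩ : Fin l) := by
          apply Fin.ext
          have h2 : (k'.1 : ℕ) + 1 = l - 1 := h
          show (k'.1 : ℕ) = l - 2
          omega
        rw [hpv, hk']
        rfl
    · cases u
      rw [show (Sum.inr () : starV (fun _ : Fin r => l)) = cen from rfl] at hy ⊢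
      rw [adj_av_cen] at hy
      have hl1 : l = 1 := by simp at hy; omega
      rw [hp]; simp [hl1]
  calc ((starGraph fun _ : Fin r => l).neighborSet (av j ⟨l - 1, by omega⟩)).ncard
      ≤ ({p} : Set (starV (fun _ : Fin r => l))).ncard :=
        Set.ncard_le_ncard hsub (Set.finite_singleton p)
    _ = 1 := Set.ncard_singleton p

lemma cen_not_mem_B (hr : 2 ≤ r) (hl : 1 ≤ l) :
    cen ∉ combBoundary (starGraph fun _ : Fin r => l) := by
  rw [mem_combBoundary_iff]
  intro hle
  have h1 : 1 < ((starGraph fun _ : Fin r => l).neighborSet cen).ncard := by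
    rw [Set.one_lt_ncard (Set.toFinite _)]
    refine ⟨av ⟨0, by omega⟩ ⟨0, by omega⟩, ?_, av ⟨1, by omega⟩ ⟨0, by omega⟩, ?_, ?_⟩
    · rw [SimpleGraph.mem_neighborSet, adj_cen_av]
    · rw [SimpleGraph.mem_neighborSet, adj_cen_av]
    · intro h
      rw [av_injEq] at h
      exact absurd (congrArg Fin.val h.1) (by simp)
  omega

lemma mid_not_mem_B (j : Fin r) (k : Fin l) (hk : k.1 + 1 < l) :
    av j k ∉ combBoundary (starGraph fun _ : Fin r => l) := by
  rw [mem_combBoundary_iff]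
  intro hle
  have h1 : 1 < ((starGraph fun _ : Fin r => l).neighborSet (av j k)).ncard := by
    rw [Set.one_lt_ncard (Set.toFinite _)]
    refine ⟨av j ⟨k.1 + 1, hk⟩, ?_, ?_⟩
    · rw [SimpleGraph.mem_neighborSet, adj_av_av]
      exact ⟨rfl, Or.inl rfl⟩
    by_cases h0 : k.1 = 0
    · refine ⟨cen, ?_, ?_⟩
      · rw [SimpleGraph.mem_neighborSet, adj_av_cen]; exact h0
      · exact fun h => av_ne_cen h
    · refine ⟨av j ⟨k.1 - 1, by omega⟩, ?_, ?_⟩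
      · rw [SimpleGraph.mem_neighborSet, adj_av_av]
        refine ⟨rfl, Or.inr (by simp; omega)⟩
      · intro h
        rw [av_injEq] at h
        have := congrArg Fin.val h.2
        simp at this; omega
  omega

lemma mem_B_iff (hr : 2 ≤ r) (hl : 1 ≤ l) (x : starV (fun _ : Fin r => l)) :
    x ∈ combBoundary (starGraph fun _ : Fin r => l) ↔
      ∃ j : Fin r, x = av j ⟨l - 1, by omega⟩ := by
  constructor
  · intro hx
    rcases x with ⟨j, k⟩ | u
    · by_cases hk : k.1 + 1 < l
      · exact absurd hx (mid_not_mem_B j k hk)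
      · have hk2 : (k.1 : ℕ) < l := k.2
        have : k = (⟨l - 1, by omega⟩ : Fin l) := Fin.ext (by show (k.1:ℕ) = l - 1; omega)
        exact ⟨j, by rw [show (Sum.inl ⟨j, k⟩ : starV (fun _ : Fin r => l)) = av j k from rfl,
          this]⟩
    · cases u
      exact absurd hx (cen_not_mem_B hr hl)
  · rintro ⟨j, rfl⟩
    exact tip_mem_B hl j

lemma bInner_eq (hr : 2 ≤ r) (hl : 1 ≤ l) (u v : starV (fun _ : Fin r => l) → ℝ) :
    bInner (combBoundary (starGraph fun _ : Fin r => l)) (fun _ => 1) u v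
      = ∑ j : Fin r, u (av j ⟨l - 1, by omega⟩) * v (av j ⟨l - 1, by omega⟩) := by
  unfold bInner
  rw [Fintype.sum_sum_type, ← Finset.univ_sigma_univ, Finset.sum_sigma]
  have h2 : ∀ b : Unit,
      (Sum.inr b : starV (fun _ : Fin r => l)) ∉ combBoundary (starGraph fun _ : Fin r => l) :=
    fun b => by cases b; exact cen_not_mem_B hr hl
  have h2' : ∀ b : Unit, ((Sum.inr b : starV (fun _ : Fin r => l)) ∈
      combBoundary (starGraph fun _ : Fin r => l)) = False := fun b => eq_false (h2 b)
  simp only [h2', if_false, Finset.sum_const_zero, add_zero]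
  refine Finset.sum_congr rfl fun j _ => ?_
  have hmem : ∀ k : Fin l,
      ((Sum.inl ⟨j, k⟩ : starV (fun _ : Fin r => l)) ∈
        combBoundary (starGraph fun _ : Fin r => l)) = (k = (⟨l - 1, by omega⟩ : Fin l)) := by
    intro k
    rw [show (Sum.inl ⟨j, k⟩ : starV (fun _ : Fin r => l)) = av j k from rfl]
    apply propext
    rw [mem_B_iff hr hl]
    constructor
    · rintro ⟨j', hj'⟩
      rw [av_injEq] at hj'
      exact hj'.2
    · rintro rfl; exact ⟨j, rfl⟩
  simp only [hmem]
  rw [Finset.sum_ite_eq' Finset.univ ((⟨l - 1, by omega⟩ : Fin l))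
    (fun k => u (Sum.inl ⟨j, k⟩) * v (Sum.inl ⟨j, k⟩) * 1)]
  simp [av]

end RegStar
namespace RegStar

open Finset

attribute [local instance] Classical.propDecidable

variable {r l : ℕ}

lemma A_zero (j : Fin r) : starVertexAt (fun _ : Fin r => l) j 0 = Sum.inr () := by
  rw [starVertexAt]; simp

lemma A_succ (j : Fin r) (d : ℕ) (h : d < l) :
    starVertexAt (fun _ : Fin r => l) j (d + 1) = Sum.inl ⟨j, ⟨d, h⟩⟩ := by
  rw [starVertexAt, dif_pos (⟨Nat.succ_pos d, by simpa using h⟩ :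
    0 < d + 1 ∧ d + 1 - 1 < (fun _ : Fin r => l) j)]
  simp

lemma sum_ite_val {n : ℕ} (m : ℕ) (f : Fin n → ℝ) :
    (∑ k : Fin n, if (k : ℕ) = m then f k else 0) = if h : m < n then f ⟨m, h⟩ else 0 := by
  split_ifs with h
  · rw [Finset.sum_eq_single (⟨m, h⟩ : Fin n)]
    · simp
    · intro k _ hk
      have : (k : ℕ) ≠ m := fun hc => hk (Fin.ext hc)
      simp [this]
    · intro hc; exact absurd (Finset.mem_univ _) hc
  · apply Finset.sum_eq_zero
    intro k _
    have : (k : ℕ) ≠ m := by have := k.2; omega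
    simp [this]

lemma sum_ite_val_left {n : ℕ} (m : ℕ) (f : Fin n → ℝ) :
    (∑ k : Fin n, if m = (k : ℕ) then f k else 0) = if h : m < n then f ⟨m, h⟩ else 0 := by
  rw [← sum_ite_val m f]
  refine Finset.sum_congr rfl fun k _ => ?_
  by_cases h : (k : ℕ) = m
  · simp [h]
  · rw [if_neg h, if_neg (fun hc => h hc.symm)]

lemma sum_ite_val' {n : ℕ} (m : ℕ) (f : Fin n → ℝ) :
    (∑ k : Fin n, if (k : ℕ) + 1 = m then f k else 0) =
      if h : 1 ≤ m ∧ m - 1 < n then f ⟨m - 1, h.2⟩ else 0 := by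
  split_ifs with h
  · rw [Finset.sum_eq_single (⟨m - 1, h.2⟩ : Fin n)]
    · rw [if_pos (show ((⟨m - 1, h.2⟩ : Fin n) : ℕ) + 1 = m by simp; omega)]
    · intro k _ hk
      have : (k : ℕ) + 1 ≠ m := fun hc => hk (Fin.ext (by simp; omega))
      simp [this]
    · intro hc; exact absurd (Finset.mem_univ _) hc
  · apply Finset.sum_eq_zero
    intro k _
    have : (k : ℕ) + 1 ≠ m := by have := k.2; omega
    simp [this]

lemma rowsum_av (u : starV (fun _ : Fin r => l) → ℝ) (j : Fin r) (k : Fin l) :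
    (∑ y : starV (fun _ : Fin r => l),
        if (starGraph fun _ : Fin r => l).Adj (Sum.inl ⟨j, k⟩) y
        then (u y - u (Sum.inl ⟨j, k⟩)) ^ 2 else 0)
      = (if h : (k : ℕ) + 1 < l
          then (u (Sum.inl ⟨j, ⟨(k : ℕ) + 1, h⟩⟩) - u (Sum.inl ⟨j, k⟩)) ^ 2 else 0)
        + (if h : 1 ≤ (k : ℕ) ∧ (k : ℕ) - 1 < l
          then (u (Sum.inl ⟨j, ⟨(k : ℕ) - 1, h.2⟩⟩) - u (Sum.inl ⟨j, k⟩)) ^ 2 else 0)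
        + (if (k : ℕ) = 0 then (u (Sum.inr ()) - u (Sum.inl ⟨j, k⟩)) ^ 2 else 0) := by
  rw [Fintype.sum_sum_type, ← Finset.univ_sigma_univ, Finset.sum_sigma]
  have hunit : (∑ b : Unit,
      if (starGraph fun _ : Fin r => l).Adj (Sum.inl ⟨j, k⟩) (Sum.inr b)
      then (u (Sum.inr b) - u (Sum.inl ⟨j, k⟩)) ^ 2 else 0)
      = if (k : ℕ) = 0 then (u (Sum.inr ()) - u (Sum.inl ⟨j, k⟩)) ^ 2 else 0 := by
    rw [Finset.univ_unique, Finset.sum_singleton]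
    have : (default : Unit) = () := rfl
    rw [this]
    congr 1
    exact propext (adj_av_cen (j := j) (k := k))
  rw [hunit]
  have hsplit : ∀ (j' : Fin r) (k' : Fin l),
      (if (starGraph fun _ : Fin r => l).Adj (Sum.inl ⟨j, k⟩) (Sum.inl ⟨j', k'⟩)
        then (u (Sum.inl ⟨j', k'⟩) - u (Sum.inl ⟨j, k⟩)) ^ 2 else 0)
      = (if j = j' then (if (k : ℕ) + 1 = (k' : ℕ)
            then (u (Sum.inl ⟨j', k'⟩) - u (Sum.inl ⟨j, k⟩)) ^ 2 else 0) else 0)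
        + (if j = j' then (if (k' : ℕ) + 1 = (k : ℕ)
            then (u (Sum.inl ⟨j', k'⟩) - u (Sum.inl ⟨j, k⟩)) ^ 2 else 0) else 0) := by
    intro j' k'
    rw [show ((starGraph fun _ : Fin r => l).Adj (Sum.inl ⟨j, k⟩) (Sum.inl ⟨j', k'⟩)) =
      (j = j' ∧ ((k : ℕ) + 1 = (k' : ℕ) ∨ (k' : ℕ) + 1 = (k : ℕ))) from
      propext (adj_av_av (j := j) (j' := j') (k := k) (k' := k'))]
    by_cases h2 : (k : ℕ) + 1 = (k' : ℕ)
    · have h3 : ¬ ((k' : ℕ) + 1 = (k : ℕ)) := by omega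
      by_cases h1 : j = j' <;> simp [h1, h2, h3]
    · by_cases h1 : j = j' <;> by_cases h3 : (k' : ℕ) + 1 = (k : ℕ) <;> simp [h1, h2, h3]
  rw [Finset.sum_congr rfl fun j' _ => Finset.sum_congr rfl fun k' _ => hsplit j' k']
  have collapse : ∀ Y : Fin r → Fin l → ℝ,
      (∑ j' : Fin r, ∑ k' : Fin l, if j = j' then Y j' k' else 0) = ∑ k' : Fin l, Y j k' := by
    intro Y
    have hper : ∀ j' : Fin r, (∑ k' : Fin l, if j = j' then Y j' k' else 0)
        = if j = j' then (∑ k' : Fin l, Y j' k') else 0 := fun j' => by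
      by_cases hj : j = j' <;> simp [hj]
    rw [Finset.sum_congr rfl fun j' _ => hper j', Finset.sum_ite_eq]
    simp
  simp only [Finset.sum_add_distrib]
  rw [collapse, collapse]
  rw [sum_ite_val_left ((k : ℕ) + 1) (fun k' => (u (Sum.inl ⟨j, k'⟩) - u (Sum.inl ⟨j, k⟩)) ^ 2),
    sum_ite_val' ((k : ℕ)) (fun k' => (u (Sum.inl ⟨j, k'⟩) - u (Sum.inl ⟨j, k⟩)) ^ 2)]

lemma rowsum_cen (hl : 1 ≤ l) (u : starV (fun _ : Fin r => l) → ℝ) :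
    (∑ y : starV (fun _ : Fin r => l),
        if (starGraph fun _ : Fin r => l).Adj (Sum.inr ()) y
        then (u y - u (Sum.inr ())) ^ 2 else 0)
      = ∑ j : Fin r, (u (Sum.inl ⟨j, ⟨0, hl⟩⟩) - u (Sum.inr ())) ^ 2 := by
  rw [Fintype.sum_sum_type, ← Finset.univ_sigma_univ, Finset.sum_sigma]
  have hunit : (∑ b : Unit,
      if (starGraph fun _ : Fin r => l).Adj (Sum.inr ()) (Sum.inr b)
      then (u (Sum.inr b) - u (Sum.inr ())) ^ 2 else 0) = 0 := by
    rw [Finset.univ_unique, Finset.sum_singleton]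
    have : (default : Unit) = () := rfl
    rw [this, if_neg not_adj_cen_cen]
  rw [hunit, add_zero]
  refine Finset.sum_congr rfl fun j _ => ?_
  have hcond : ∀ k : Fin l,
      ((starGraph fun _ : Fin r => l).Adj (Sum.inr ()) (Sum.inl ⟨j, k⟩)) = ((k : ℕ) = 0) :=
    fun k => propext (adj_cen_av (j := j) (k := k))
  simp only [hcond]
  rw [sum_ite_val 0 (fun k => (u (Sum.inl ⟨j, k⟩) - u (Sum.inr ())) ^ 2)]
  rw [dif_pos (show 0 < (fun _ : Fin r => l) j from hl)]

end RegStar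
namespace RegStar

open Finset

attribute [local instance] Classical.propDecidable

variable {r l : ℕ}

lemma A_pos (j : Fin r) (d : ℕ) (h1 : 1 ≤ d) (h2 : d ≤ l) :
    starVertexAt (fun _ : Fin r => l) j d = Sum.inl ⟨j, ⟨d - 1, show d - 1 < l by omega⟩⟩ := by
  rw [starVertexAt, dif_pos (show 0 < d ∧ d - 1 < (fun _ : Fin r => l) j from
    ⟨by omega, show d - 1 < l by omega⟩)]

lemma sumT1 (hl : 1 ≤ l) (u : starV (fun _ : Fin r => l) → ℝ) (j : Fin r) :
    (∑ k : Fin l, if h : (k : ℕ) + 1 < l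
        then (u (Sum.inl ⟨j, ⟨(k : ℕ) + 1, h⟩⟩) - u (Sum.inl ⟨j, k⟩)) ^ 2 else 0)
      = ∑ d ∈ Finset.range (l - 1),
          (u (starVertexAt (fun _ : Fin r => l) j (d + 1 + 1))
            - u (starVertexAt (fun _ : Fin r => l) j (d + 1))) ^ 2 := by
  have step1 : (∑ k : Fin l, if h : (k : ℕ) + 1 < l
        then (u (Sum.inl ⟨j, ⟨(k : ℕ) + 1, h⟩⟩) - u (Sum.inl ⟨j, k⟩)) ^ 2 else 0)
      = ∑ d ∈ Finset.range l, (if h : d + 1 < l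
          then (u (starVertexAt (fun _ : Fin r => l) j (d + 1 + 1))
            - u (starVertexAt (fun _ : Fin r => l) j (d + 1))) ^ 2 else 0) := by
    rw [← Fin.sum_univ_eq_sum_range]
    refine Finset.sum_congr rfl fun k _ => ?_
    have hk : (k : ℕ) < l := k.2
    by_cases h : (k : ℕ) + 1 < l
    · rw [dif_pos h, dif_pos h, A_pos j ((k : ℕ) + 1 + 1) (by omega) (by omega),
        A_pos j ((k : ℕ) + 1) (by omega) (by omega)]
      rfl
    · rw [dif_neg h, dif_neg h]
  rw [step1, show Finset.range l = Finset.range (l - 1 + 1) from by rw [Nat.sub_add_cancel hl],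
    Finset.sum_range_succ, dif_neg (show ¬ (l - 1 + 1 < l) by omega), add_zero]
  refine Finset.sum_congr rfl fun d hd => ?_
  rw [Finset.mem_range] at hd
  rw [dif_pos (show d + 1 < l by omega)]

lemma sumT2 (hl : 1 ≤ l) (u : starV (fun _ : Fin r => l) → ℝ) (j : Fin r) :
    (∑ k : Fin l, if h : 1 ≤ (k : ℕ) ∧ (k : ℕ) - 1 < l
        then (u (Sum.inl ⟨j, ⟨(k : ℕ) - 1, h.2⟩⟩) - u (Sum.inl ⟨j, k⟩)) ^ 2 else 0)
      = ∑ d ∈ Finset.range (l - 1),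
          (u (starVertexAt (fun _ : Fin r => l) j (d + 1 + 1))
            - u (starVertexAt (fun _ : Fin r => l) j (d + 1))) ^ 2 := by
  have step1 : (∑ k : Fin l, if h : 1 ≤ (k : ℕ) ∧ (k : ℕ) - 1 < l
        then (u (Sum.inl ⟨j, ⟨(k : ℕ) - 1, h.2⟩⟩) - u (Sum.inl ⟨j, k⟩)) ^ 2 else 0)
      = ∑ d ∈ Finset.range l, (if 1 ≤ d
          then (u (starVertexAt (fun _ : Fin r => l) j d)
            - u (starVertexAt (fun _ : Fin r => l) j (d + 1))) ^ 2 else 0) := by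
    rw [← Fin.sum_univ_eq_sum_range]
    refine Finset.sum_congr rfl fun k _ => ?_
    have hk : (k : ℕ) < l := k.2
    by_cases h : 1 ≤ (k : ℕ)
    · rw [dif_pos (⟨h, by omega⟩ : 1 ≤ (k : ℕ) ∧ (k : ℕ) - 1 < l), if_pos h,
        A_pos j (k : ℕ) h (by omega), A_pos j ((k : ℕ) + 1) (by omega) (by omega)]
      rfl
    · rw [dif_neg (show ¬ (1 ≤ (k : ℕ) ∧ (k : ℕ) - 1 < l) by omega), if_neg h]
  rw [step1, show Finset.range l = Finset.range (l - 1 + 1) from by rw [Nat.sub_add_cancel hl],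
    Finset.sum_range_succ']
  rw [if_neg (by omega : ¬ (1 ≤ 0)), add_zero]
  refine Finset.sum_congr rfl fun d hd => ?_
  rw [if_pos (by omega : 1 ≤ d + 1)]
  ring

lemma sumT3 (hl : 1 ≤ l) (u : starV (fun _ : Fin r => l) → ℝ) (j : Fin r) :
    (∑ k : Fin l, if (k : ℕ) = 0 then (u (Sum.inr ()) - u (Sum.inl ⟨j, k⟩)) ^ 2 else 0)
      = (u (starVertexAt (fun _ : Fin r => l) j 0)
          - u (starVertexAt (fun _ : Fin r => l) j 1)) ^ 2 := by
  rw [sum_ite_val 0 (fun k => (u (Sum.inr ()) - u (Sum.inl ⟨j, k⟩)) ^ 2)]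
  rw [dif_pos (show 0 < (fun _ : Fin r => l) j from hl)]
  rw [A_zero, A_pos j 1 le_rfl hl]

lemma Rsplit (hl : 1 ≤ l) (u : starV (fun _ : Fin r => l) → ℝ) (j : Fin r) :
    (∑ d ∈ Finset.range l,
        (u (starVertexAt (fun _ : Fin r => l) j (d + 1))
          - u (starVertexAt (fun _ : Fin r => l) j d)) ^ 2)
      = (u (starVertexAt (fun _ : Fin r => l) j 1)
          - u (starVertexAt (fun _ : Fin r => l) j 0)) ^ 2
        + ∑ d ∈ Finset.range (l - 1),
            (u (starVertexAt (fun _ : Fin r => l) j (d + 1 + 1))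
              - u (starVertexAt (fun _ : Fin r => l) j (d + 1))) ^ 2 := by
  rw [show Finset.range l = Finset.range (l - 1 + 1) from by rw [Nat.sub_add_cancel hl],
    Finset.sum_range_succ']
  rw [add_comm]

lemma energy_eq (hl : 1 ≤ l) (u : starV (fun _ : Fin r => l) → ℝ) :
    energy (starGraph fun _ : Fin r => l) (fun _ _ => 1) u
      = ∑ j : Fin r, ∑ d ∈ Finset.range l,
          (u (starVertexAt (fun _ : Fin r => l) j (d + 1))
            - u (starVertexAt (fun _ : Fin r => l) j d)) ^ 2 := by
  rw [energy]
  simp only [one_mul]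
  rw [Fintype.sum_sum_type, ← Finset.univ_sigma_univ, Finset.sum_sigma]
  have hu : (∑ b : Unit, ∑ y : starV (fun _ : Fin r => l),
      if (starGraph fun _ : Fin r => l).Adj (Sum.inr b) y
      then (u y - u (Sum.inr b)) ^ 2 else 0)
      = ∑ j : Fin r, (u (Sum.inl ⟨j, ⟨0, hl⟩⟩) - u (Sum.inr ())) ^ 2 := by
    rw [Finset.univ_unique, Finset.sum_singleton,
      show (default : Unit) = () from rfl, rowsum_cen hl u]
  rw [hu]
  rw [Finset.sum_congr rfl fun j (_ : j ∈ Finset.univ) =>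
    Finset.sum_congr rfl fun k (_ : k ∈ Finset.univ) => rowsum_av u j k]
  simp only [Finset.sum_add_distrib]
  rw [Finset.sum_congr rfl fun j (_ : j ∈ Finset.univ) => sumT1 hl u j,
    Finset.sum_congr rfl fun j (_ : j ∈ Finset.univ) => sumT2 hl u j,
    Finset.sum_congr rfl fun j (_ : j ∈ Finset.univ) => sumT3 hl u j]
  rw [Finset.sum_congr rfl fun j (_ : j ∈ Finset.univ) =>
    (Rsplit hl u j : _ = _)]
  simp only [show ∀ j : Fin r, (u (Sum.inl ⟨j, ⟨0, hl⟩⟩) - u (Sum.inr ())) ^ 2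
      = (u (starVertexAt (fun _ : Fin r => l) j 1)
        - u (starVertexAt (fun _ : Fin r => l) j 0)) ^ 2 from
    fun j => by rw [A_zero, A_pos j 1 le_rfl hl]]
  simp only [show ∀ j : Fin r, (u (starVertexAt (fun _ : Fin r => l) j 0)
        - u (starVertexAt (fun _ : Fin r => l) j 1)) ^ 2
      = (u (starVertexAt (fun _ : Fin r => l) j 1)
        - u (starVertexAt (fun _ : Fin r => l) j 0)) ^ 2 from fun j => by ring]
  rw [Finset.sum_add_distrib]
  ring

end RegStar
namespace RegStar

open Finset

attribute [local instance] Classical.propDecidable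

variable {r l : ℕ}

/-- Lower bound: any function whose boundary values sum to zero has Rayleigh
quotient at least `1/l`. -/
lemma lower_bound (hr : 2 ≤ r) (hl : 1 ≤ l) (u : starV (fun _ : Fin r => l) → ℝ)
    (hsum : ∑ j : Fin r, u (starVertexAt (fun _ : Fin r => l) j l) = 0) :
    (1 / (l : ℝ)) * bInner (combBoundary (starGraph fun _ : Fin r => l)) (fun _ => 1) u u
      ≤ energy (starGraph fun _ : Fin r => l) (fun _ _ => 1) u := by
  have hl0 : (0 : ℝ) < l := by exact_mod_cast hl
  rw [bInner_eq hr hl, energy_eq hl]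
  have hAl : ∀ j : Fin r, u (av j ⟨l - 1, by omega⟩) * u (av j ⟨l - 1, by omega⟩)
      = (u (starVertexAt (fun _ : Fin r => l) j l)) ^ 2 := fun j => by
    rw [A_pos j l hl le_rfl]; ring
  rw [Finset.sum_congr rfl fun j _ => hAl j]
  set t : Fin r → ℝ := fun j => u (starVertexAt (fun _ : Fin r => l) j l) with ht
  set c : ℝ := u (Sum.inr ()) with hc
  -- step 1: ∑ t^2 ≤ ∑ (t - c)^2
  have step1 : ∑ j : Fin r, (t j) ^ 2 ≤ ∑ j : Fin r, (t j - c) ^ 2 := by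
    have hexp : ∑ j : Fin r, (t j - c) ^ 2
        = ∑ j : Fin r, (t j) ^ 2 - 2 * c * (∑ j : Fin r, t j) + r * c ^ 2 := by
      rw [Finset.mul_sum]
      rw [show (r : ℝ) * c ^ 2 = ∑ _j : Fin r, c ^ 2 from by
        rw [Finset.sum_const, Finset.card_univ, Fintype.card_fin, nsmul_eq_mul]]
      rw [← Finset.sum_sub_distrib, ← Finset.sum_add_distrib]
      exact Finset.sum_congr rfl fun j _ => by ring
    rw [hexp, hsum]
    have : (0 : ℝ) ≤ (r : ℝ) * c ^ 2 := by positivity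
    linarith
  -- step 2: per arm Cauchy-Schwarz
  have step2 : ∀ j : Fin r, (t j - c) ^ 2 ≤ (l : ℝ) * ∑ d ∈ Finset.range l,
      (u (starVertexAt (fun _ : Fin r => l) j (d + 1))
        - u (starVertexAt (fun _ : Fin r => l) j d)) ^ 2 := by
    intro j
    have htel : ∑ d ∈ Finset.range l,
        (u (starVertexAt (fun _ : Fin r => l) j (d + 1))
          - u (starVertexAt (fun _ : Fin r => l) j d)) = t j - c := by
      rw [Finset.sum_range_sub (fun d => u (starVertexAt (fun _ : Fin r => l) j d)) l]
      rw [ht, hc, A_zero]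
    calc (t j - c) ^ 2
        = (∑ d ∈ Finset.range l, (u (starVertexAt (fun _ : Fin r => l) j (d + 1))
            - u (starVertexAt (fun _ : Fin r => l) j d))) ^ 2 := by rw [htel]
      _ ≤ (Finset.range l).card * ∑ d ∈ Finset.range l,
            (u (starVertexAt (fun _ : Fin r => l) j (d + 1))
              - u (starVertexAt (fun _ : Fin r => l) j d)) ^ 2 :=
          sq_sum_le_card_mul_sum_sq
      _ = (l : ℝ) * ∑ d ∈ Finset.range l,
            (u (starVertexAt (fun _ : Fin r => l) j (d + 1))
              - u (starVertexAt (fun _ : Fin r => l) j d)) ^ 2 := by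
          rw [Finset.card_range]
  calc (1 / (l : ℝ)) * ∑ j : Fin r, (t j) ^ 2
      ≤ (1 / (l : ℝ)) * ∑ j : Fin r, (t j - c) ^ 2 := by
        apply mul_le_mul_of_nonneg_left step1; positivity
    _ ≤ (1 / (l : ℝ)) * ∑ j : Fin r, ((l : ℝ) * ∑ d ∈ Finset.range l,
          (u (starVertexAt (fun _ : Fin r => l) j (d + 1))
            - u (starVertexAt (fun _ : Fin r => l) j d)) ^ 2) := by
        apply mul_le_mul_of_nonneg_left (Finset.sum_le_sum fun j _ => step2 j); positivity
    _ = ∑ j : Fin r, ∑ d ∈ Finset.range l,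
          (u (starVertexAt (fun _ : Fin r => l) j (d + 1))
            - u (starVertexAt (fun _ : Fin r => l) j d)) ^ 2 := by
        rw [← Finset.mul_sum]
        field_simp

/-- The function which is linear with slope `c j` on arm `j` and equal to `a`
at the center. -/
def lin (a : ℝ) (c : Fin r → ℝ) : starV (fun _ : Fin r => l) → ℝ :=
  fun x => match x with
  | Sum.inl ⟨j, k⟩ => a + c j * ((k : ℕ) + 1)
  | Sum.inr _ => a

@[simp] lemma lin_inl (a : ℝ) (c : Fin r → ℝ) (j : Fin r) (k : Fin l) :
    lin a c (Sum.inl ⟨j, k⟩) = a + c j * ((k : ℕ) + 1) := rfl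

@[simp] lemma lin_inr (a : ℝ) (c : Fin r → ℝ) (x : Unit) :
    lin a c (Sum.inr x : starV (fun _ : Fin r => l)) = a := rfl

lemma lin_A (a : ℝ) (c : Fin r → ℝ) (j : Fin r) (d : ℕ) (h1 : 1 ≤ d) (h2 : d ≤ l) :
    lin a c (starVertexAt (fun _ : Fin r => l) j d) = a + c j * d := by
  rw [A_pos j d h1 h2, lin_inl]
  congr 1
  have : ((d - 1 : ℕ) : ℝ) = (d : ℝ) - 1 := by
    rw [Nat.cast_sub h1]; simp
  rw [this]
  ring

lemma energy_lin (hl : 1 ≤ l) (a : ℝ) (c : Fin r → ℝ) :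
    energy (starGraph fun _ : Fin r => l) (fun _ _ => 1) (lin a c)
      = (l : ℝ) * ∑ j : Fin r, (c j) ^ 2 := by
  rw [energy_eq hl, Finset.mul_sum]
  refine Finset.sum_congr rfl fun j _ => ?_
  have harm : ∀ d ∈ Finset.range l,
      (lin a c (starVertexAt (fun _ : Fin r => l) j (d + 1))
        - lin a c (starVertexAt (fun _ : Fin r => l) j d)) ^ 2 = (c j) ^ 2 := by
    intro d hd
    rw [Finset.mem_range] at hd
    rcases Nat.eq_zero_or_pos d with rfl | hdpos
    · rw [lin_A a c j 1 le_rfl hl, A_zero, lin_inr]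
      push_cast; ring
    · rw [lin_A a c j (d + 1) (by omega) (by omega), lin_A a c j d (by omega) (by omega)]
      push_cast; ring
  rw [Finset.sum_congr rfl harm, Finset.sum_const, Finset.card_range, nsmul_eq_mul]

lemma bInner_lin (hr : 2 ≤ r) (hl : 1 ≤ l) (a : ℝ) (c : Fin r → ℝ) :
    bInner (combBoundary (starGraph fun _ : Fin r => l)) (fun _ => 1) (lin a c) (lin a c)
      = ∑ j : Fin r, (a + c j * l) ^ 2 := by
  rw [bInner_eq hr hl]
  refine Finset.sum_congr rfl fun j _ => ?_
  have key : ∀ k : Fin l, (k : ℕ) = l - 1 →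
      lin a c (av j k) * lin a c (av j k) = (a + c j * l) ^ 2 := by
    intro k hk
    rw [lin_inl, hk, show ((l - 1 : ℕ) : ℝ) = (l : ℝ) - 1 from by
      rw [Nat.cast_sub hl]; simp]
    ring
  exact key _ rfl

end RegStar
namespace RegStar

open Finset

attribute [local instance] Classical.propDecidable

variable {r l : ℕ}

lemma lin_tip (hl : 1 ≤ l) (a : ℝ) (c : Fin r → ℝ) (j : Fin r) (k : Fin l)
    (hk : (k : ℕ) = l - 1) : lin a c (av j k) = a + c j * l := by
  rw [lin_inl, hk, show ((l - 1 : ℕ) : ℝ) = (l : ℝ) - 1 from by rw [Nat.cast_sub hl]; simp]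
  ring

lemma rayleigh_lin (hr : 2 ≤ r) (hl : 1 ≤ l) (a : ℝ) (c : Fin r → ℝ)
    (hc : ∑ j : Fin r, c j = 0) :
    energy (starGraph fun _ : Fin r => l) (fun _ _ => 1) (lin a c) ≤
      (1 / (l : ℝ)) * bInner (combBoundary (starGraph fun _ : Fin r => l)) (fun _ => 1)
        (lin a c) (lin a c) := by
  have hl0 : (0 : ℝ) < l := by exact_mod_cast hl
  rw [energy_lin hl, bInner_lin hr hl]
  have hexp : ∑ j : Fin r, (a + c j * l) ^ 2
      = (r : ℝ) * a ^ 2 + 2 * a * l * (∑ j : Fin r, c j)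
        + (l : ℝ) ^ 2 * ∑ j : Fin r, (c j) ^ 2 := by
    rw [Finset.mul_sum, Finset.mul_sum,
      show (r : ℝ) * a ^ 2 = ∑ _j : Fin r, a ^ 2 from by
        rw [Finset.sum_const, Finset.card_univ, Fintype.card_fin, nsmul_eq_mul],
      ← Finset.sum_add_distrib, ← Finset.sum_add_distrib]
    exact Finset.sum_congr rfl fun j _ => by ring
  rw [hexp, hc, mul_zero, add_zero]
  have key : (1 / (l : ℝ)) * ((r : ℝ) * a ^ 2 + (l : ℝ) ^ 2 * ∑ j : Fin r, (c j) ^ 2)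
      = (r : ℝ) * a ^ 2 / l + (l : ℝ) * ∑ j : Fin r, (c j) ^ 2 := by
    field_simp
  rw [key]
  have : (0 : ℝ) ≤ (r : ℝ) * a ^ 2 / l := by positivity
  linarith

lemma oneOverL_mem (hr : 2 ≤ r) (hl : 1 ≤ l) (i : ℕ) (hi2 : 2 ≤ i) (hir : i ≤ r) :
    ∃ E : Submodule ℝ (starV (fun _ : Fin r => l) → ℝ), Module.finrank ℝ E = i ∧
      (∀ u ∈ E, (∀ x ∈ combBoundary (starGraph fun _ : Fin r => l), u x = 0) → u = 0) ∧
      ∀ u ∈ E, energy (starGraph fun _ : Fin r => l) (fun _ _ => 1) u ≤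
        (1 / (l : ℝ)) * bInner (combBoundary (starGraph fun _ : Fin r => l)) (fun _ => 1)
          u u := by
  have hi0 : 0 < i := by omega
  have h0r : 0 < r := by omega
  -- the basis
  set g : Fin i → (starV (fun _ : Fin r => l) → ℝ) := fun t =>
    if (t : ℕ) = 0 then lin 1 (fun _ => 0)
    else lin 0 (fun j' => (if (j' : ℕ) = 0 then 1 else 0)
      - (if (j' : ℕ) = (t : ℕ) then 1 else 0)) with hg
  -- the coefficient vector of a combination
  set cvec : (Fin i → ℝ) → (Fin r → ℝ) := fun gc j' =>
    ∑ t : Fin i, (if (t : ℕ) = 0 then 0 else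
      gc t * ((if (j' : ℕ) = 0 then 1 else 0) - (if (j' : ℕ) = (t : ℕ) then 1 else 0)))
    with hcv
  -- representation lemma
  have repr : ∀ gc : Fin i → ℝ,
      ∑ t : Fin i, gc t • g t = lin (gc ⟨0, hi0⟩) (cvec gc) := by
    intro gc
    funext x
    rw [Finset.sum_apply]
    simp only [Pi.smul_apply, smul_eq_mul]
    rcases x with ⟨j, k⟩ | b
    · have hterm : ∀ t : Fin i, gc t * g t (Sum.inl ⟨j, k⟩)
          = (if (t : ℕ) = 0 then gc t else 0)
            + (if (t : ℕ) = 0 then 0 else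
                gc t * ((if (j : ℕ) = 0 then 1 else 0)
                  - (if (j : ℕ) = (t : ℕ) then 1 else 0))) * ((k : ℕ) + 1) := by
        intro t
        rw [hg]
        by_cases h : (t : ℕ) = 0 <;> simp [h] <;> try ring
      rw [Finset.sum_congr rfl fun t _ => hterm t, Finset.sum_add_distrib,
        sum_ite_val 0 gc, dif_pos hi0, ← Finset.sum_mul]
      rw [show lin (gc ⟨0, hi0⟩) (cvec gc) (Sum.inl ⟨j, k⟩)
        = gc ⟨0, hi0⟩ + cvec gc j * ((k : ℕ) + 1) from rfl]
    · have hterm : ∀ t : Fin i, gc t * g t (Sum.inr b)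
          = (if (t : ℕ) = 0 then gc t else 0) := by
        intro t
        rw [hg]
        by_cases h : (t : ℕ) = 0 <;> simp [h]
      rw [Finset.sum_congr rfl fun t _ => hterm t, sum_ite_val 0 gc, dif_pos hi0]
      rfl
  -- the coefficient vector sums to zero
  have hcvec0 : ∀ gc : Fin i → ℝ, ∑ j' : Fin r, cvec gc j' = 0 := by
    intro gc
    simp only [hcv]
    rw [Finset.sum_comm]
    apply Finset.sum_eq_zero
    intro t _
    by_cases h : (t : ℕ) = 0
    · simp [h]
    · simp only [h, if_false]
      rw [← Finset.mul_sum]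
      have hz : ∑ j' : Fin r, ((if (j' : ℕ) = 0 then (1:ℝ) else 0)
          - (if (j' : ℕ) = (t : ℕ) then 1 else 0)) = 0 := by
        rw [Finset.sum_sub_distrib, sum_ite_val 0 (fun _ : Fin r => (1:ℝ)),
          sum_ite_val (t : ℕ) (fun _ : Fin r => (1:ℝ)), dif_pos h0r,
          dif_pos (lt_of_lt_of_le t.2 hir), sub_self]
      rw [hz, mul_zero]
  -- value of cvec at a nonzero index
  have cval : ∀ gc : Fin i → ℝ, ∀ j : Fin r, (j : ℕ) ≠ 0 →
      cvec gc j = -(if h : (j : ℕ) < i then gc ⟨(j : ℕ), h⟩ else 0) := by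
    intro gc j hj
    simp only [hcv]
    have hterm : ∀ t : Fin i, (if (t : ℕ) = 0 then (0:ℝ) else
        gc t * ((if (j : ℕ) = 0 then 1 else 0) - (if (j : ℕ) = (t : ℕ) then 1 else 0)))
        = (if (t : ℕ) = (j : ℕ) then -gc t else 0) := by
      intro t
      by_cases h1 : (t : ℕ) = 0
      · have h2 : ¬ ((t : ℕ) = (j : ℕ)) := by omega
        have h4 : ¬ ((0 : ℕ) = (j : ℕ)) := fun hc => hj hc.symm
        simp [h1, h2, h4]
      · by_cases h2 : (t : ℕ) = (j : ℕ)
        · have h3 : (j : ℕ) = (t : ℕ) := h2.symm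
          simp [h1, h3, hj]
          try ring
        · have h3 : ¬ ((j : ℕ) = (t : ℕ)) := fun hc => h2 hc.symm
          simp [h1, h2, h3, hj]
    rw [Finset.sum_congr rfl fun t _ => hterm t, sum_ite_val (j : ℕ) (fun t => -gc t)]
    split_ifs with h
    · rfl
    · rw [neg_zero]
  -- linear independence
  have hli : LinearIndependent ℝ g := by
    rw [Fintype.linearIndependent_iff]
    intro gc hgc
    have heq : lin (l := l) (gc ⟨0, hi0⟩) (cvec gc) = 0 := by rw [← repr gc]; exact hgc
    have ha : gc ⟨0, hi0⟩ = 0 := by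
      have := congrFun heq (Sum.inr () : starV (fun _ : Fin r => l))
      simpa using this
    intro t
    by_cases ht : (t : ℕ) = 0
    · have : t = ⟨0, hi0⟩ := Fin.ext ht
      rw [this]; exact ha
    · have htr : (t : ℕ) < r := lt_of_lt_of_le t.2 hir
      have := congrFun heq (av ⟨(t : ℕ), htr⟩ ⟨l - 1, by omega⟩)
      rw [lin_tip hl _ _ _ _ rfl] at this
      rw [cval gc ⟨(t : ℕ), htr⟩ ht] at this
      rw [dif_pos t.2] at this
      have hl0 : (0 : ℝ) < l := by exact_mod_cast hl
      have hfix : (⟨(t : ℕ), t.2⟩ : Fin i) = t := Fin.ext rfl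
      rw [hfix] at this
      rw [ha] at this
      simp at this
      rcases this with h | h
      · exact h
      · exact absurd h (by positivity)
  refine ⟨Submodule.span ℝ (Set.range g), ?_, ?_, ?_⟩
  · rw [finrank_span_eq_card hli, Fintype.card_fin]
  · -- injectivity on the boundary
    intro u hu hub
    rw [Submodule.mem_span_range_iff_exists_fun] at hu
    obtain ⟨gc, hgc⟩ := hu
    have hl0 : (0 : ℝ) < l := by exact_mod_cast hl
    have hr0 : (0 : ℝ) < r := by positivity
    have hu_lin : u = lin (l := l) (gc ⟨0, hi0⟩) (cvec gc) := by rw [← hgc, repr gc]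
    have htip : ∀ j : Fin r, gc ⟨0, hi0⟩ + cvec gc j * l = 0 := by
      intro j
      have hx := hub _ (tip_mem_B hl j)
      rw [hu_lin, lin_tip hl _ _ _ _ rfl] at hx
      exact hx
    have hsum0 : ∑ j : Fin r, (gc ⟨0, hi0⟩ + cvec gc j * l) = 0 :=
      Finset.sum_eq_zero fun j _ => htip j
    have hexp : ∑ j : Fin r, (gc ⟨0, hi0⟩ + cvec gc j * l)
        = (r : ℝ) * gc ⟨0, hi0⟩ + (l : ℝ) * ∑ j : Fin r, cvec gc j := by
      rw [Finset.sum_add_distrib, Finset.sum_const, Finset.card_univ, Fintype.card_fin,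
        nsmul_eq_mul, Finset.mul_sum]
      congr 1
      exact Finset.sum_congr rfl fun j _ => by ring
    rw [hexp, hcvec0 gc, mul_zero, add_zero] at hsum0
    have ha : gc ⟨0, hi0⟩ = 0 := by
      rcases mul_eq_zero.mp hsum0 with h | h
      · exact absurd h (by positivity)
      · exact h
    have hcj : ∀ j : Fin r, cvec gc j = 0 := by
      intro j
      have := htip j
      rw [ha, zero_add] at this
      rcases mul_eq_zero.mp this with h | h
      · exact h
      · exact absurd h (by positivity)
    rw [hu_lin]
    funext x
    rcases x with ⟨j, k⟩ | b
    · rw [lin_inl, ha, hcj j]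
      simp
    · rw [lin_inr, ha]
      simp
  · -- Rayleigh quotient
    intro u hu
    rw [Submodule.mem_span_range_iff_exists_fun] at hu
    obtain ⟨gc, hgc⟩ := hu
    rw [← hgc, repr gc]
    exact rayleigh_lin hr hl _ _ (hcvec0 gc)

end RegStar
namespace RegStar

open Finset

attribute [local instance] Classical.propDecidable

variable {r l : ℕ}

lemma sigma_lower (hr : 2 ≤ r) (hl : 1 ≤ l) (i : ℕ) (hi2 : 2 ≤ i) (σ : ℝ)
    (hσ : ∃ E : Submodule ℝ (starV (fun _ : Fin r => l) → ℝ), Module.finrank ℝ E = i ∧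
      (∀ u ∈ E, (∀ x ∈ combBoundary (starGraph fun _ : Fin r => l), u x = 0) → u = 0) ∧
      ∀ u ∈ E, energy (starGraph fun _ : Fin r => l) (fun _ _ => 1) u ≤
        σ * bInner (combBoundary (starGraph fun _ : Fin r => l)) (fun _ => 1) u u) :
    1 / (l : ℝ) ≤ σ := by
  obtain ⟨E, hdim, hinj, hineq⟩ := hσ
  let φ : E →ₗ[ℝ] ℝ :=
    { toFun := fun u => ∑ j : Fin r,
        (u : starV (fun _ : Fin r => l) → ℝ) (starVertexAt (fun _ : Fin r => l) j l),
      map_add' := fun x y => by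
        simp only [Submodule.coe_add, Pi.add_apply]
        exact Finset.sum_add_distrib,
      map_smul' := fun m x => by
        simp only [Submodule.coe_smul, Pi.smul_apply, smul_eq_mul, RingHom.id_apply]
        exact (Finset.mul_sum _ _ _).symm }
  have hnotinj : ¬ Function.Injective φ := by
    intro hinjφ
    have hle := LinearMap.finrank_le_finrank_of_injective hinjφ
    rw [hdim, Module.finrank_self] at hle
    omega
  have hker : LinearMap.ker φ ≠ ⊥ := fun h => hnotinj (LinearMap.ker_eq_bot.mp h)
  obtain ⟨x, hxker, hx0⟩ := (Submodule.ne_bot_iff _).mp hker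
  set u : starV (fun _ : Fin r => l) → ℝ := (x : starV (fun _ : Fin r => l) → ℝ) with hudef
  have hu_mem : u ∈ E := x.2
  have hu0 : u ≠ 0 := fun h => hx0 (by
    apply Subtype.ext
    exact h)
  have hsum : ∑ j : Fin r, u (starVertexAt (fun _ : Fin r => l) j l) = 0 := hxker
  have hlb := lower_bound hr hl u hsum
  have hub := hineq u hu_mem
  have hbnn : 0 ≤ bInner (combBoundary (starGraph fun _ : Fin r => l)) (fun _ => 1) u u := by
    rw [bInner_eq hr hl]
    exact Finset.sum_nonneg fun j _ => mul_self_nonneg _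
  have hbne : bInner (combBoundary (starGraph fun _ : Fin r => l)) (fun _ => 1) u u ≠ 0 := by
    intro h0
    have hvan : ∀ y ∈ combBoundary (starGraph fun _ : Fin r => l), u y = 0 := by
      intro y hy
      obtain ⟨j, rfl⟩ := (mem_B_iff hr hl y).mp hy
      have hz := (Finset.sum_eq_zero_iff_of_nonneg
        (fun j (_ : j ∈ Finset.univ) => mul_self_nonneg
          (u (av j ⟨l - 1, by omega⟩)))).mp (by rw [← bInner_eq hr hl]; exact h0) j
        (Finset.mem_univ j)
      exact mul_self_eq_zero.mp hz
    exact hu0 (hinj u hu_mem hvan)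
  have hbpos : 0 < bInner (combBoundary (starGraph fun _ : Fin r => l)) (fun _ => 1) u u :=
    lt_of_le_of_ne hbnn (Ne.symm hbne)
  exact (mul_le_mul_iff_of_pos_right hbpos).mp (le_trans hlb hub)

end RegStar

/-- **Lemma 5.2.** For `r ≥ 2` and `l ≥ 1`, the regular star `St(r;l)` (viewed as a
combinatorial tree with boundary its leaves) satisfies
`σ₂ = σ₃ = ⋯ = σ_r = 1/l`. -/
theorem regular_star_eigenvalues (r l : ℕ) (hr : 2 ≤ r) (hl : 1 ≤ l) :
    ∀ i : ℕ, 2 ≤ i → i ≤ r →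
      steklov (starGraph fun _ : Fin r => l)
        (combBoundary (starGraph fun _ : Fin r => l)) (fun _ => 1) (fun _ _ => 1) i =
        1 / (l : ℝ) := by
  intro i hi2 hir
  rw [steklov]
  have hmem : (1 / (l : ℝ)) ∈ {σ : ℝ | ∃ E : Submodule ℝ (starV (fun _ : Fin r => l) → ℝ),
      Module.finrank ℝ E = i ∧
      (∀ u ∈ E, (∀ x ∈ combBoundary (starGraph fun _ : Fin r => l), u x = 0) → u = 0) ∧
      ∀ u ∈ E, energy (starGraph fun _ : Fin r => l) (fun _ _ => 1) u ≤
        (1 / (l : ℝ)) * bInner (combBoundary (starGraph fun _ : Fin r => l)) (fun _ => 1) u u} :=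
    RegStar.oneOverL_mem hr hl i hi2 hir
  have hlow : ∀ σ ∈ {σ : ℝ | ∃ E : Submodule ℝ (starV (fun _ : Fin r => l) → ℝ),
      Module.finrank ℝ E = i ∧
      (∀ u ∈ E, (∀ x ∈ combBoundary (starGraph fun _ : Fin r => l), u x = 0) → u = 0) ∧
      ∀ u ∈ E, energy (starGraph fun _ : Fin r => l) (fun _ _ => 1) u ≤
        σ * bInner (combBoundary (starGraph fun _ : Fin r => l)) (fun _ => 1) u u},
      1 / (l : ℝ) ≤ σ := fun σ hσ => RegStar.sigma_lower hr hl i hi2 σ hσ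
  exact le_antisymm (csInf_le ⟨1 / (l : ℝ), hlow⟩ hmem) (le_csInf ⟨1 / (l : ℝ), hmem⟩ hlow)
end

section
/- Let r, l ≥ 1 and let 0 = μ_1 < μ_2 ≤ … ≤ μ_{r+1} be the Laplacian eigenvalues of the path of length r, namely μ_i = 2 − 2cos((i−1)π/(r+1)). Then for every i = 1, 2, …, r+1, σ_i(Comb(r;l)) = μ_i/(1 + μ_i·l). -/
/-
Common definitions for Steklov eigenvalues on weighted finite graphs with boundary,
following Yu-Yu, "Monotonicity of Steklov eigenvalues on graphs and applications".
-/

attribute [local instance] Classical.propDecidable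

noncomputable section
open Real Finset

namespace CombLemma

variable {W : Type*} [Fintype W] (G : SimpleGraph W)

/-- numerator of the Laplacian -/
def Sfun (u : W → ℝ) (x : W) : ℝ := ∑ y : W, if G.Adj x y then u y - u x else 0

lemma Sfun_smul_add (a : ℝ) (u v : W → ℝ) (x : W) :
    Sfun G (a • u + v) x = a * Sfun G u x + Sfun G v x := by
  unfold Sfun
  rw [Finset.mul_sum, ← Finset.sum_add_distrib]
  refine Finset.sum_congr rfl fun y _ => ?_
  split_ifs <;> simp <;> ring

lemma green (u v : W → ℝ) :
    (∑ x : W, ∑ y : W, if G.Adj x y then (u y - u x) * (v y - v x) else 0) / 2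
      = -∑ x : W, v x * Sfun G u x := by
  have h1 : ∀ x y : W, (if G.Adj x y then (u y - u x) * (v y - v x) else 0)
      = (if G.Adj x y then (u y - u x) * v y else 0) - (if G.Adj x y then (u y - u x) * v x else 0) := by
    intro x y; split_ifs <;> ring
  have e1 : (∑ x : W, ∑ y : W, if G.Adj x y then (u y - u x) * v y else 0)
      = -∑ x : W, v x * Sfun G u x := by
    rw [Finset.sum_comm]
    rw [show (∑ y : W, ∑ x : W, if G.Adj x y then (u y - u x) * v y else 0)
        = ∑ y : W, ∑ x : W, if G.Adj y x then (u y - u x) * v y else 0 from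
      Finset.sum_congr rfl fun y _ => Finset.sum_congr rfl fun x _ => by
        rw [SimpleGraph.adj_comm]]
    rw [← Finset.sum_neg_distrib]
    refine Finset.sum_congr rfl fun y _ => ?_
    unfold Sfun
    rw [Finset.mul_sum, ← Finset.sum_neg_distrib]
    refine Finset.sum_congr rfl fun x _ => ?_
    split_ifs <;> ring
  have e2 : (∑ x : W, ∑ y : W, if G.Adj x y then (u y - u x) * v x else 0)
      = ∑ x : W, v x * Sfun G u x := by
    refine Finset.sum_congr rfl fun x _ => ?_
    unfold Sfun
    rw [Finset.mul_sum]
    refine Finset.sum_congr rfl fun y _ => ?_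
    split_ifs <;> ring
  calc (∑ x : W, ∑ y : W, if G.Adj x y then (u y - u x) * (v y - v x) else 0) / 2
      = ((∑ x : W, ∑ y : W, if G.Adj x y then (u y - u x) * v y else 0)
        - ∑ x : W, ∑ y : W, if G.Adj x y then (u y - u x) * v x else 0) / 2 := by
        rw [← Finset.sum_sub_distrib]
        congr 1
        refine Finset.sum_congr rfl fun x _ => ?_
        rw [← Finset.sum_sub_distrib]
        exact Finset.sum_congr rfl fun y _ => h1 x y
    _ = -∑ x : W, v x * Sfun G u x := by rw [e1, e2]; ring

/-- sum over neighbors: one neighbor -/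
lemma sum_nbr_one (x y1 : W) (h : ∀ y, G.Adj x y ↔ y = y1) (g : W → ℝ) :
    (∑ y : W, if G.Adj x y then g y else 0) = g y1 := by
  rw [show (fun y => if G.Adj x y then g y else 0) = fun y => if y = y1 then g y1 else 0 from
    funext fun y => by by_cases hy : y = y1 <;> simp [h, hy]]
  simp

lemma sum_nbr_two (x y1 y2 : W) (h12 : y1 ≠ y2)
    (h : ∀ y, G.Adj x y ↔ y = y1 ∨ y = y2) (g : W → ℝ) :
    (∑ y : W, if G.Adj x y then g y else 0) = g y1 + g y2 := by
  rw [show (fun y => if G.Adj x y then g y else 0)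
      = fun y => (if y = y1 then g y1 else 0) + (if y = y2 then g y2 else 0) from
    funext fun y => by
      by_cases hy1 : y = y1
      · subst hy1; simp [h, h12]
      · by_cases hy2 : y = y2
        · subst hy2; simp [h, Ne.symm h12]
        · simp [h, hy1, hy2]]
  rw [Finset.sum_add_distrib]; simp

lemma sum_nbr_three (x y1 y2 y3 : W) (h12 : y1 ≠ y2) (h13 : y1 ≠ y3) (h23 : y2 ≠ y3)
    (h : ∀ y, G.Adj x y ↔ y = y1 ∨ y = y2 ∨ y = y3) (g : W → ℝ) :
    (∑ y : W, if G.Adj x y then g y else 0) = g y1 + g y2 + g y3 := by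
  rw [show (fun y => if G.Adj x y then g y else 0)
      = fun y => ((if y = y1 then g y1 else 0) + (if y = y2 then g y2 else 0))
          + (if y = y3 then g y3 else 0) from
    funext fun y => by
      by_cases hy1 : y = y1
      · subst hy1; simp [h, h12, h13]
      · by_cases hy2 : y = y2
        · subst hy2; simp [h, h23, Ne.symm h12]
        · by_cases hy3 : y = y3
          · subst hy3; simp [h, Ne.symm h13, Ne.symm h23]
          · simp [h, hy1, hy2, hy3]]
  rw [Finset.sum_add_distrib, Finset.sum_add_distrib]; simp


/-- angle -/
def th (r t : ℕ) : ℝ := ((t : ℝ) - 1) * Real.pi / ((r : ℝ) + 1)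
/-- path eigenvalue -/
def mu (r t : ℕ) : ℝ := 2 - 2 * Real.cos (th r t)
/-- comb Steklov eigenvalue -/
def sg (r l t : ℕ) : ℝ := mu r t / (1 + mu r t * l)
/-- path eigenfunction, real argument -/
def ph (r t : ℕ) (s : ℝ) : ℝ := Real.cos ((2 * s + 1) * th r t / 2)

variable (r l t : ℕ)

lemma trig_rec (s : ℝ) : ph r t (s - 1) + ph r t (s + 1) = (2 - mu r t) * ph r t s := by
  have e1 : (2 * (s - 1) + 1) * th r t / 2 = (2 * s + 1) * th r t / 2 - th r t := by ring
  have e2 : (2 * (s + 1) + 1) * th r t / 2 = (2 * s + 1) * th r t / 2 + th r t := by ring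
  unfold ph mu
  rw [e1, e2, Real.cos_sub, Real.cos_add]
  ring

lemma trig_refl_left : ph r t (-1) = ph r t 0 := by
  unfold ph
  rw [show (2 * (-1 : ℝ) + 1) * th r t / 2 = -((2 * 0 + 1) * th r t / 2) by ring, Real.cos_neg]

lemma trig_refl_right : ph r t ((r : ℝ) + 1) = ph r t r := by
  unfold ph
  have hr1 : ((r : ℝ) + 1) ≠ 0 := by positivity
  have e : (2 * ((r : ℝ) + 1) + 1) * th r t / 2
      = -((2 * (r : ℝ) + 1) * th r t / 2) + ((t : ℤ) : ℝ) * (2 * Real.pi) - 1 * (2 * Real.pi) := by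
    unfold th
    field_simp
    push_cast
    ring
  rw [e, show -((2 * (r : ℝ) + 1) * th r t / 2) + ((t : ℤ) : ℝ) * (2 * Real.pi) - 1 * (2 * Real.pi)
      = -((2 * (r : ℝ) + 1) * th r t / 2) + (((t : ℤ) - 1 : ℤ) : ℝ) * (2 * Real.pi) by push_cast; ring,
    Real.cos_add_int_mul_two_pi, Real.cos_neg]

lemma trig_left : ph r t 1 - ph r t 0 = -(mu r t) * ph r t 0 := by
  have h := trig_rec r t 0
  rw [show (0 : ℝ) - 1 = -1 by ring, show (0 : ℝ) + 1 = 1 by ring, trig_refl_left] at h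
  linarith

lemma trig_right : ph r t ((r : ℝ) - 1) - ph r t r = -(mu r t) * ph r t r := by
  have h := trig_rec r t r
  rw [trig_refl_right] at h
  linarith

lemma trig_mid (s : ℝ) : ph r t (s - 1) + ph r t (s + 1) - 2 * ph r t s = -(mu r t) * ph r t s := by
  have h := trig_rec r t s
  linarith

lemma mu_nonneg : 0 ≤ mu r t := by
  unfold mu
  have := Real.cos_le_one (th r t)
  linarith

lemma one_add_mul_pos : 0 < 1 + mu r t * l := by
  have := mu_nonneg r t
  positivity

lemma sg_nonneg : 0 ≤ sg r l t := div_nonneg (mu_nonneg r t) (one_add_mul_pos r l t).le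

lemma mu_eq_sg_mul : mu r t = sg r l t * (1 + mu r t * l) := by
  unfold sg
  rw [div_mul_cancel₀]
  exact (one_add_mul_pos r l t).ne'

lemma th_mem (ht1 : 1 ≤ t) (ht2 : t ≤ r + 1) : th r t ∈ Set.Ico 0 Real.pi := by
  unfold th
  constructor
  · apply div_nonneg
    · have : (1 : ℝ) ≤ (t : ℝ) := by exact_mod_cast ht1
      have := Real.pi_pos
      nlinarith
    · positivity
  · rw [div_lt_iff₀ (by positivity)]
    have h : (t : ℝ) - 1 ≤ (r : ℝ) := by
      have : (t : ℝ) ≤ (r : ℝ) + 1 := by exact_mod_cast ht2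
      linarith
    have := Real.pi_pos
    nlinarith

lemma mu_strictMono {s t : ℕ} (hs1 : 1 ≤ s) (hst : s < t) (ht2 : t ≤ r + 1) :
    mu r s < mu r t := by
  have hs := th_mem r s hs1 (by omega)
  have ht := th_mem r t (by omega) ht2
  have hlt : th r s < th r t := by
    unfold th
    rw [div_lt_div_iff₀ (by positivity) (by positivity)]
    have hst' : (s : ℝ) < (t : ℝ) := by exact_mod_cast hst
    have key := mul_lt_mul_of_pos_right (show (s : ℝ) - 1 < (t : ℝ) - 1 by linarith)
      (mul_pos Real.pi_pos (show (0:ℝ) < (r : ℝ) + 1 by positivity))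
    nlinarith [key]
  have hc := Real.strictAntiOn_cos (Set.mem_Icc.mpr ⟨hs.1, hs.2.le⟩)
    (Set.mem_Icc.mpr ⟨ht.1, ht.2.le⟩) hlt
  unfold mu
  linarith

lemma sg_strictMono {s t : ℕ} (hs1 : 1 ≤ s) (hst : s < t) (ht2 : t ≤ r + 1) :
    sg r l s < sg r l t := by
  have hm := mu_strictMono r hs1 hst ht2
  have h1 := one_add_mul_pos r l s
  have h2 := one_add_mul_pos r l t
  have hms := mu_nonneg r s
  unfold sg
  rw [div_lt_div_iff₀ h1 h2]
  nlinarith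

lemma sg_mono {s t : ℕ} (hs1 : 1 ≤ s) (hst : s ≤ t) (ht2 : t ≤ r + 1) :
    sg r l s ≤ sg r l t := by
  rcases eq_or_lt_of_le hst with h | h
  · subst h; rfl
  · exact (sg_strictMono r l hs1 h ht2).le

lemma sg_injOn {s t : ℕ} (hs1 : 1 ≤ s) (hs2 : s ≤ r + 1) (ht1 : 1 ≤ t) (ht2 : t ≤ r + 1)
    (h : sg r l s = sg r l t) : s = t := by
  by_contra hne
  rcases Nat.lt_or_ge s t with hlt | hge
  · exact absurd h (sg_strictMono r l hs1 hlt ht2).ne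
  · have : t < s := by omega
    exact absurd h.symm (sg_strictMono r l ht1 this hs2).ne

lemma ph_zero_pos (ht1 : 1 ≤ t) (ht2 : t ≤ r + 1) : 0 < ph r t 0 := by
  have h := th_mem r t ht1 ht2
  have hpi := Real.pi_pos
  unfold ph
  apply Real.cos_pos_of_mem_Ioo
  constructor
  · rw [show (2 * (0:ℝ) + 1) * th r t / 2 = th r t / 2 by ring]
    nlinarith [h.1]
  · rw [show (2 * (0:ℝ) + 1) * th r t / 2 = th r t / 2 by ring]
    nlinarith [h.2]


abbrev VV (r l : ℕ) := Fin (r + 1) × Fin (l + 1)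

def crel (r l : ℕ) (a b : VV r l) : Prop :=
  (a.2.1 = 0 ∧ b.2.1 = 0 ∧ a.1.1 + 1 = b.1.1) ∨ (a.1 = b.1 ∧ a.2.1 + 1 = b.2.1)

def cG (r l : ℕ) : SimpleGraph (VV r l) := SimpleGraph.fromRel (crel r l)

variable (r l t : ℕ)

lemma adj_iff (a b : VV r l) :
    (cG r l).Adj a b ↔
      ((a.2.1 = 0 ∧ b.2.1 = 0 ∧ a.1.1 + 1 = b.1.1) ∨ (a.1.1 = b.1.1 ∧ a.2.1 + 1 = b.2.1) ∨
        (b.2.1 = 0 ∧ a.2.1 = 0 ∧ b.1.1 + 1 = a.1.1) ∨ (b.1.1 = a.1.1 ∧ b.2.1 + 1 = a.2.1)) := by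
  show (SimpleGraph.fromRel (crel r l)).Adj a b ↔ _
  rw [SimpleGraph.fromRel_adj]
  unfold crel
  rw [ne_eq, Prod.ext_iff]
  simp only [Fin.ext_iff]
  omega

lemma nbr_A (hl : 1 ≤ l) (k : Fin (r + 1)) (j : Fin (l + 1)) (hj : j.1 = l) :
    ∀ y, (cG r l).Adj (k, j) y ↔ y = (k, (⟨l - 1, by omega⟩ : Fin (l + 1))) := by
  rintro ⟨k', j'⟩
  rw [adj_iff]
  have h1 := k'.isLt
  have h2 := j'.isLt
  simp only [Prod.mk.injEq, Fin.ext_iff]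
  omega

lemma nbr_B (hr : 1 ≤ r) (hl : 1 ≤ l) (k : Fin (r + 1)) (j : Fin (l + 1))
    (hj : j.1 = 0) (hk : k.1 = 0) :
    ∀ y, (cG r l).Adj (k, j) y ↔
      y = ((⟨1, by omega⟩ : Fin (r + 1)), (⟨0, by omega⟩ : Fin (l + 1))) ∨
      y = (k, (⟨1, by omega⟩ : Fin (l + 1))) := by
  rintro ⟨k', j'⟩
  rw [adj_iff]
  have h1 := k'.isLt
  have h2 := j'.isLt
  simp only [Prod.mk.injEq, Fin.ext_iff]
  omega

lemma nbr_C (hr : 1 ≤ r) (hl : 1 ≤ l) (k : Fin (r + 1)) (j : Fin (l + 1))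
    (hj : j.1 = 0) (hk : k.1 = r) :
    ∀ y, (cG r l).Adj (k, j) y ↔
      y = ((⟨r - 1, by omega⟩ : Fin (r + 1)), (⟨0, by omega⟩ : Fin (l + 1))) ∨
      y = (k, (⟨1, by omega⟩ : Fin (l + 1))) := by
  rintro ⟨k', j'⟩
  rw [adj_iff]
  have h1 := k'.isLt
  have h2 := j'.isLt
  simp only [Prod.mk.injEq, Fin.ext_iff]
  omega

lemma nbr_D (hl : 1 ≤ l) (k : Fin (r + 1)) (j : Fin (l + 1))
    (hj : j.1 = 0) (hk0 : 0 < k.1) (hkr : k.1 < r) :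
    ∀ y, (cG r l).Adj (k, j) y ↔
      y = ((⟨k.1 - 1, by omega⟩ : Fin (r + 1)), (⟨0, by omega⟩ : Fin (l + 1))) ∨
      y = ((⟨k.1 + 1, by omega⟩ : Fin (r + 1)), (⟨0, by omega⟩ : Fin (l + 1))) ∨
      y = (k, (⟨1, by omega⟩ : Fin (l + 1))) := by
  rintro ⟨k', j'⟩
  rw [adj_iff]
  have h1 := k'.isLt
  have h2 := j'.isLt
  simp only [Prod.mk.injEq, Fin.ext_iff]
  omega

lemma nbr_E (k : Fin (r + 1)) (j : Fin (l + 1)) (hj0 : 0 < j.1) (hjl : j.1 < l) :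
    ∀ y, (cG r l).Adj (k, j) y ↔
      y = (k, (⟨j.1 - 1, by omega⟩ : Fin (l + 1))) ∨
      y = (k, (⟨j.1 + 1, by omega⟩ : Fin (l + 1))) := by
  rintro ⟨k', j'⟩
  rw [adj_iff]
  have h1 := k'.isLt
  have h2 := j'.isLt
  simp only [Prod.mk.injEq, Fin.ext_iff]
  omega


def ef (r l t : ℕ) : VV r l → ℝ := fun p => (1 + mu r t * (p.2.1 : ℝ)) * ph r t (p.1.1 : ℝ)

lemma Sfun_ef_bnd (hl : 1 ≤ l) (k : Fin (r + 1)) (j : Fin (l + 1)) (hj : j.1 = l) :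
    Sfun (cG r l) (ef r l t) (k, j) = -(sg r l t) * ef r l t (k, j) := by
  unfold Sfun
  rw [sum_nbr_one (cG r l) _ _ (nbr_A r l hl k j hj)]
  have hc : ((l - 1 : ℕ) : ℝ) = (l : ℝ) - 1 := by
    rw [Nat.cast_sub hl]; simp
  simp only [ef, hc, hj]
  linear_combination (- ph r t (k.1 : ℝ)) * mu_eq_sg_mul r l t

lemma Sfun_ef_B (hr : 1 ≤ r) (hl : 1 ≤ l) (k : Fin (r + 1)) (j : Fin (l + 1))
    (hj : j.1 = 0) (hk : k.1 = 0) :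
    Sfun (cG r l) (ef r l t) (k, j) = 0 := by
  unfold Sfun
  rw [sum_nbr_two (cG r l) _ _ _ (by simp [Prod.ext_iff, Fin.ext_iff] <;> omega)
    (nbr_B r l hr hl k j hj hk)]
  simp only [ef, hj, hk]
  push_cast
  have h := trig_left r t
  rw [show ((0:ℝ)) = ((0:ℕ):ℝ) by norm_num] at h
  push_cast at h
  linear_combination h

lemma Sfun_ef_C (hr : 1 ≤ r) (hl : 1 ≤ l) (k : Fin (r + 1)) (j : Fin (l + 1))
    (hj : j.1 = 0) (hk : k.1 = r) :
    Sfun (cG r l) (ef r l t) (k, j) = 0 := by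
  unfold Sfun
  rw [sum_nbr_two (cG r l) _ _ _ (by simp [Prod.ext_iff, Fin.ext_iff] <;> omega)
    (nbr_C r l hr hl k j hj hk)]
  have hc : ((r - 1 : ℕ) : ℝ) = (r : ℝ) - 1 := by
    rw [Nat.cast_sub hr]; simp
  simp only [ef, hj, hk, hc]
  push_cast
  have h := trig_right r t
  linear_combination h

lemma Sfun_ef_D (hl : 1 ≤ l) (k : Fin (r + 1)) (j : Fin (l + 1))
    (hj : j.1 = 0) (hk0 : 0 < k.1) (hkr : k.1 < r) :
    Sfun (cG r l) (ef r l t) (k, j) = 0 := by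
  unfold Sfun
  rw [sum_nbr_three (cG r l) _ _ _ _
    (by simp [Prod.ext_iff, Fin.ext_iff] <;> omega)
    (by simp [Prod.ext_iff, Fin.ext_iff] <;> omega)
    (by simp [Prod.ext_iff, Fin.ext_iff] <;> omega)
    (nbr_D r l hl k j hj hk0 hkr)]
  have hc : ((k.1 - 1 : ℕ) : ℝ) = (k.1 : ℝ) - 1 := by
    rw [Nat.cast_sub hk0]; simp
  simp only [ef, hj, hc]
  push_cast
  have h := trig_mid r t (k.1 : ℝ)
  linear_combination h

lemma Sfun_ef_E (k : Fin (r + 1)) (j : Fin (l + 1)) (hj0 : 0 < j.1) (hjl : j.1 < l) :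
    Sfun (cG r l) (ef r l t) (k, j) = 0 := by
  unfold Sfun
  rw [sum_nbr_two (cG r l) _ _ _ (by simp [Prod.ext_iff, Fin.ext_iff] <;> omega)
    (nbr_E r l k j hj0 hjl)]
  have hc : ((j.1 - 1 : ℕ) : ℝ) = (j.1 : ℝ) - 1 := by
    rw [Nat.cast_sub hj0]; simp
  simp only [ef, hc]
  push_cast
  ring

lemma Sfun_ef_interior (hr : 1 ≤ r) (hl : 1 ≤ l) (x : VV r l) (hx : x.2.1 ≠ l) :
    Sfun (cG r l) (ef r l t) x = 0 := by
  obtain ⟨k, j⟩ := x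
  have hjl : j.1 < l := by have := j.isLt; simp at hx; omega
  by_cases hj : j.1 = 0
  · by_cases hk : k.1 = 0
    · exact Sfun_ef_B r l t hr hl k j hj hk
    · by_cases hk2 : k.1 = r
      · exact Sfun_ef_C r l t hr hl k j hj hk2
      · exact Sfun_ef_D r l t hl k j hj (by omega) (by have := k.isLt; omega)
  · exact Sfun_ef_E r l t k j (by omega) hjl

lemma cG_eq : cG r l = combGraph r l := rfl

def LL (l : ℕ) : Fin (l + 1) := ⟨l, Nat.lt_succ_self l⟩

lemma bnd_set (hr : 1 ≤ r) (hl : 1 ≤ l) :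
    combBoundary (cG r l) = {p : VV r l | p.2.1 = l} := by
  ext ⟨k, j⟩
  simp only [combBoundary, Set.mem_setOf_eq]
  constructor
  · intro h
    by_contra hx
    have hjl : j.1 < l := by have := j.isLt; omega
    have h2 : 1 < ((cG r l).neighborSet (k, j)).ncard := by
      rw [Set.one_lt_ncard (Set.toFinite _)]
      by_cases hj : j.1 = 0
      · by_cases hk : k.1 = 0
        · exact ⟨_, (nbr_B r l hr hl k j hj hk _).mpr (Or.inl rfl),
            _, (nbr_B r l hr hl k j hj hk _).mpr (Or.inr rfl),
            by simp [Prod.ext_iff, Fin.ext_iff] <;> omega⟩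
        · by_cases hk2 : k.1 = r
          · exact ⟨_, (nbr_C r l hr hl k j hj hk2 _).mpr (Or.inl rfl),
              _, (nbr_C r l hr hl k j hj hk2 _).mpr (Or.inr rfl),
              by simp [Prod.ext_iff, Fin.ext_iff] <;> omega⟩
          · have hk0 : 0 < k.1 := by omega
            have hkr : k.1 < r := by have := k.isLt; omega
            exact ⟨_, (nbr_D r l hl k j hj hk0 hkr _).mpr (Or.inl rfl),
              _, (nbr_D r l hl k j hj hk0 hkr _).mpr (Or.inr (Or.inl rfl)),
              by simp [Prod.ext_iff, Fin.ext_iff] <;> omega⟩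
      · exact ⟨_, (nbr_E r l k j (by omega) hjl _).mpr (Or.inl rfl),
          _, (nbr_E r l k j (by omega) hjl _).mpr (Or.inr rfl),
          by simp [Prod.ext_iff, Fin.ext_iff] <;> omega⟩
    omega
  · intro h
    have : (cG r l).neighborSet (k, j) = {(k, (⟨l - 1, by omega⟩ : Fin (l + 1)))} := by
      ext y
      rw [SimpleGraph.mem_neighborSet, nbr_A r l hl k j h y]
      rfl
    rw [this, Set.ncard_singleton]

/-- collapse a boundary sum -/
lemma sum_bd (g : VV r l → ℝ) :
    (∑ x : VV r l, if x.2.1 = l then g x else 0) = ∑ k : Fin (r + 1), g (k, LL l) := by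
  rw [Fintype.sum_prod_type]
  refine Finset.sum_congr rfl fun k _ => ?_
  rw [show (fun j : Fin (l + 1) => if ((k, j) : VV r l).2.1 = l then g (k, j) else 0)
      = fun j => if j = LL l then g (k, LL l) else 0 from funext fun j => by
    by_cases hj : j = LL l
    · subst hj; simp [LL]
    · have : ¬ j.1 = l := fun hc => hj (Fin.ext hc)
      simp [this, hj]]
  simp

/-- the boundary bilinear form -/
def Bq (r l : ℕ) (u v : VV r l → ℝ) : ℝ := ∑ k : Fin (r + 1), u (k, LL l) * v (k, LL l)

lemma bInner_eq (hr : 1 ≤ r) (hl : 1 ≤ l) (u v : VV r l → ℝ) :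
    bInner (combBoundary (cG r l)) (fun _ => 1) u v = Bq r l u v := by
  unfold bInner Bq
  rw [show (fun x : VV r l => if x ∈ combBoundary (cG r l) then u x * v x * 1 else 0)
      = fun x => if x.2.1 = l then u x * v x else 0 from funext fun x => by
    rw [bnd_set r l hr hl]; simp]
  rw [sum_bd]

lemma Bq_symm (u v : VV r l → ℝ) : Bq r l u v = Bq r l v u :=
  Finset.sum_congr rfl fun k _ => by ring

lemma Bq_sum_left {ι : Type*} [Fintype ι] (c : ι → ℝ) (F : ι → VV r l → ℝ) (v : VV r l → ℝ) :
    Bq r l (∑ j, c j • F j) v = ∑ j, c j * Bq r l (F j) v := by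
  unfold Bq
  rw [Finset.sum_congr rfl fun k (_ : k ∈ Finset.univ) => show
      (∑ j, c j • F j) (k, LL l) * v (k, LL l) = ∑ j, c j * (F j (k, LL l) * v (k, LL l)) by
    rw [Finset.sum_apply, Finset.sum_mul]
    exact Finset.sum_congr rfl fun j _ => by simp; ring]
  rw [Finset.sum_comm]
  exact Finset.sum_congr rfl fun j _ => by rw [Finset.mul_sum]

lemma Bq_add_left (u u' v : VV r l → ℝ) : Bq r l (u + u') v = Bq r l u v + Bq r l u' v := by
  unfold Bq
  rw [← Finset.sum_add_distrib]
  exact Finset.sum_congr rfl fun k _ => by simp; ring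

lemma Bq_sub_left (u u' v : VV r l → ℝ) : Bq r l (u - u') v = Bq r l u v - Bq r l u' v := by
  unfold Bq
  rw [← Finset.sum_sub_distrib]
  exact Finset.sum_congr rfl fun k _ => by simp; ring

/-- Laplacian numerator as linear map -/
def Sl (r l : ℕ) : (VV r l → ℝ) →ₗ[ℝ] (VV r l → ℝ) where
  toFun u := Sfun (cG r l) u
  map_add' u v := funext fun x => by
    have h := Sfun_smul_add (cG r l) 1 u v x
    simpa using h
  map_smul' a u := funext fun x => by
    have h := Sfun_smul_add (cG r l) a u 0 x
    have h0 : Sfun (cG r l) (0 : VV r l → ℝ) x = 0 := by simp [Sfun]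
    simp only [add_zero] at h
    simpa [h0] using h

/-- the energy bilinear form (via Green) -/
def Eq2 (r l : ℕ) (u v : VV r l → ℝ) : ℝ := -∑ x : VV r l, v x * Sl r l u x

lemma Eq2_green (u v : VV r l → ℝ) :
    (∑ x : VV r l, ∑ y : VV r l, if (cG r l).Adj x y then (u y - u x) * (v y - v x) else 0) / 2
      = Eq2 r l u v := green (cG r l) u v

lemma energy_eq (u : VV r l → ℝ) :
    energy (cG r l) (fun _ _ => 1) u = Eq2 r l u u := by
  unfold energy
  rw [← Eq2_green]
  congr 1
  refine Finset.sum_congr rfl fun x _ => Finset.sum_congr rfl fun y _ => ?_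
  split_ifs <;> ring

lemma energy_nonneg (u : VV r l → ℝ) : 0 ≤ energy (cG r l) (fun _ _ => 1) u := by
  unfold energy
  apply div_nonneg _ (by norm_num)
  refine Finset.sum_nonneg fun x _ => Finset.sum_nonneg fun y _ => ?_
  split_ifs <;> positivity

lemma Eq2_symm (u v : VV r l → ℝ) : Eq2 r l u v = Eq2 r l v u := by
  rw [← Eq2_green, ← Eq2_green]
  congr 1
  refine Finset.sum_congr rfl fun x _ => Finset.sum_congr rfl fun y _ => ?_
  split_ifs <;> ring

lemma Eq2_sum_left {ι : Type*} [Fintype ι] (c : ι → ℝ) (F : ι → VV r l → ℝ) (v : VV r l → ℝ) :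
    Eq2 r l (∑ j, c j • F j) v = ∑ j, c j * Eq2 r l (F j) v := by
  unfold Eq2
  rw [map_sum]
  rw [Finset.sum_congr rfl fun x (_ : x ∈ Finset.univ) => show
      v x * (∑ j, Sl r l (c j • F j)) x = ∑ j, c j * (v x * Sl r l (F j) x) by
    rw [Finset.sum_apply, Finset.mul_sum]
    exact Finset.sum_congr rfl fun j _ => by simp [map_smul]; ring]
  rw [Finset.sum_comm, ← Finset.sum_neg_distrib]
  exact Finset.sum_congr rfl fun j _ => by rw [mul_neg, ← Finset.mul_sum]

lemma Eq2_add_left (u u' v : VV r l → ℝ) :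
    Eq2 r l (u + u') v = Eq2 r l u v + Eq2 r l u' v := by
  unfold Eq2
  rw [map_add]
  simp only [Pi.add_apply, mul_add]
  rw [Finset.sum_add_distrib]
  ring

/-- the eigen-relation: the energy form of an eigenfunction against anything -/
lemma eig_rel (hr : 1 ≤ r) (hl : 1 ≤ l) (v : VV r l → ℝ) :
    Eq2 r l (ef r l t) v = sg r l t * Bq r l (ef r l t) v := by
  unfold Eq2
  rw [show (fun x : VV r l => v x * Sl r l (ef r l t) x)
      = fun x => if x.2.1 = l then -(sg r l t * (ef r l t x * v x)) else 0 from funext fun x => by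
    by_cases hx : x.2.1 = l
    · have := Sfun_ef_bnd r l t hl x.1 x.2 hx
      simp only [hx, if_pos]
      show v x * Sl r l (ef r l t) x = _
      show v x * Sfun (cG r l) (ef r l t) x = _
      rw [show ((x.1, x.2) : VV r l) = x from rfl] at this
      rw [this]; ring
    · have : Sfun (cG r l) (ef r l t) x = 0 := by
        have := Sfun_ef_interior r l t hr hl x hx
        exact this
      simp only [hx, if_neg, if_false]
      show v x * Sfun (cG r l) (ef r l t) x = 0
      rw [this]; ring]
  rw [sum_bd]
  unfold Bq
  rw [Finset.mul_sum, ← Finset.sum_neg_distrib]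
  exact Finset.sum_congr rfl fun k _ => by ring

lemma Bq_smul_left (a : ℝ) (u v : VV r l → ℝ) : Bq r l (a • u) v = a * Bq r l u v := by
  unfold Bq
  rw [Finset.mul_sum]
  exact Finset.sum_congr rfl fun k _ => by simp; ring

lemma Bq_zero_left (v : VV r l → ℝ) : Bq r l 0 v = 0 := by simp [Bq]

def BqL (r l : ℕ) (v : VV r l → ℝ) : (VV r l → ℝ) →ₗ[ℝ] ℝ where
  toFun u := Bq r l u v
  map_add' u u' := Bq_add_left r l u u' v
  map_smul' a u := by simpa using Bq_smul_left r l a u v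

/-- eigenfamily indexed by `Fin (r+1)` -/
def Fj (r l : ℕ) (j : Fin (r + 1)) : VV r l → ℝ := ef r l (j.1 + 1)

def Wt (r l : ℕ) (j : Fin (r + 1)) : ℝ := Bq r l (Fj r l j) (Fj r l j)

lemma eig_Fj (hr : 1 ≤ r) (hl : 1 ≤ l) (j : Fin (r + 1)) (v : VV r l → ℝ) :
    Eq2 r l (Fj r l j) v = sg r l (j.1 + 1) * Bq r l (Fj r l j) v :=
  eig_rel r l (j.1 + 1) hr hl v

lemma Wt_pos (j : Fin (r + 1)) : 0 < Wt r l j := by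
  unfold Wt Bq
  apply Finset.sum_pos' (fun k _ => mul_self_nonneg _)
  refine ⟨⟨0, Nat.succ_pos r⟩, Finset.mem_univ _, ?_⟩
  have h1 : 0 < ph r (j.1 + 1) 0 := ph_zero_pos r (j.1 + 1) (by omega) (by have := j.isLt; omega)
  have h2 : 0 < 1 + mu r (j.1 + 1) * l := one_add_mul_pos r l (j.1 + 1)
  have : Fj r l j ((⟨0, Nat.succ_pos r⟩ : Fin (r + 1)), LL l)
      = (1 + mu r (j.1 + 1) * l) * ph r (j.1 + 1) 0 := by
    simp [Fj, ef, LL]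
  rw [this]
  positivity

lemma orth_Fj (hr : 1 ≤ r) (hl : 1 ≤ l) {i j : Fin (r + 1)} (hij : i ≠ j) :
    Bq r l (Fj r l i) (Fj r l j) = 0 := by
  have h1 := eig_Fj r l hr hl i (Fj r l j)
  have h2 := eig_Fj r l hr hl j (Fj r l i)
  rw [← Eq2_symm] at h2
  rw [h1, Bq_symm r l (Fj r l j) (Fj r l i)] at h2
  have hsg : sg r l (i.1 + 1) ≠ sg r l (j.1 + 1) := by
    intro hc
    have := sg_injOn r l (s := i.1 + 1) (t := j.1 + 1) (by omega)
      (by have := i.isLt; omega) (by omega) (by have := j.isLt; omega) hc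
    exact hij (Fin.ext (by omega))
  by_contra hB
  exact hsg (mul_right_cancel₀ hB h2)

lemma Bq_combo (hr : 1 ≤ r) (hl : 1 ≤ l) {ι : Type*} [Fintype ι]
    (e : ι → Fin (r + 1)) (he : Function.Injective e) (c : ι → ℝ) (t : ι) :
    Bq r l (∑ s, c s • Fj r l (e s)) (Fj r l (e t)) = c t * Wt r l (e t) := by
  rw [Bq_sum_left]
  rw [Finset.sum_eq_single t]
  · rfl
  · intro s _ hst
    rw [orth_Fj r l hr hl (fun hc => hst (he hc))]
    ring
  · intro h
    exact absurd (Finset.mem_univ t) h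

lemma upper (hr : 1 ≤ r) (hl : 1 ≤ l) (i : ℕ) (hi1 : 1 ≤ i) (hi2 : i ≤ r + 1) :
    ∃ E : Submodule ℝ (VV r l → ℝ), Module.finrank ℝ E = i ∧
      (∀ u ∈ E, (∀ x ∈ combBoundary (cG r l), u x = 0) → u = 0) ∧
      ∀ u ∈ E, energy (cG r l) (fun _ _ => 1) u
        ≤ sg r l i * bInner (combBoundary (cG r l)) (fun _ => 1) u u := by
  have hcast : ∀ s : Fin i, s.1 < r + 1 := fun s => by have := s.isLt; omega
  set e : Fin i → Fin (r + 1) := fun s => ⟨s.1, hcast s⟩ with he_def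
  have he : Function.Injective e := fun a b hab => Fin.ext (by
    have : (e a).1 = (e b).1 := by rw [hab]
    simpa [he_def] using this)
  set g : Fin i → (VV r l → ℝ) := fun s => Fj r l (e s) with hg_def
  have hBu : ∀ (u : VV r l → ℝ) (c : Fin i → ℝ), (∑ s, c s • g s) = u →
      ∀ t : Fin i, Bq r l u (g t) = c t * Wt r l (e t) := by
    intro u c hc t
    rw [← hc]
    exact Bq_combo r l hr hl e he c t
  have hli : LinearIndependent ℝ g := by
    rw [Fintype.linearIndependent_iff]
    intro c hc t
    have h0 : Bq r l 0 (g t) = c t * Wt r l (e t) := by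
      rw [← hc]; exact Bq_combo r l hr hl e he c t
    rw [Bq_zero_left] at h0
    have := Wt_pos r l (e t)
    nlinarith [this]
  refine ⟨Submodule.span ℝ (Set.range g), ?_, ?_, ?_⟩
  · rw [finrank_span_eq_card hli, Fintype.card_fin]
  · intro u hu hbd
    obtain ⟨c, hc⟩ := (Submodule.mem_span_range_iff_exists_fun ℝ).mp hu
    have hBz : ∀ t : Fin i, Bq r l u (g t) = 0 := by
      intro t
      unfold Bq
      apply Finset.sum_eq_zero
      intro k _
      have : u (k, LL l) = 0 := by
        apply hbd
        rw [bnd_set r l hr hl]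
        simp [LL]
      rw [this]; ring
    have hc0 : ∀ t, c t = 0 := by
      intro t
      have h1 := hBu u c hc t
      have h2 := hBz t
      have := Wt_pos r l (e t)
      nlinarith [h1, h2, this]
    rw [← hc]
    apply Finset.sum_eq_zero
    intro t _
    rw [hc0 t, zero_smul]
  · intro u hu
    obtain ⟨c, hc⟩ := (Submodule.mem_span_range_iff_exists_fun ℝ).mp hu
    rw [bInner_eq r l hr hl, energy_eq]
    have hB : Bq r l u u = ∑ s, c s * (c s * Wt r l (e s)) := by
      conv_lhs => rw [← hc]
      rw [Bq_sum_left]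
      exact Finset.sum_congr rfl fun s _ => by
        rw [Bq_symm, hBu _ c rfl s]
    have hE : Eq2 r l u u = ∑ s, c s * (sg r l (s.1 + 1) * (c s * Wt r l (e s))) := by
      conv_lhs => rw [← hc]
      rw [Eq2_sum_left]
      refine Finset.sum_congr rfl fun s _ => ?_
      rw [show g s = Fj r l (e s) from rfl, eig_Fj r l hr hl (e s) _, Bq_symm, hBu _ c rfl s]
    rw [hE, hB, Finset.mul_sum]
    apply Finset.sum_le_sum
    intro s _
    have hmono : sg r l (s.1 + 1) ≤ sg r l i :=
      sg_mono r l (by omega) (by have := s.isLt; omega) hi2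
    have hW := Wt_pos r l (e s)
    have key := mul_le_mul_of_nonneg_right hmono
      (mul_nonneg (mul_self_nonneg (c s)) hW.le)
    nlinarith [key]

@[simp] lemma BqL_apply (v u : VV r l → ℝ) : BqL r l v u = Bq r l u v := rfl

lemma dot_sum_left {ι : Type*} [Fintype ι] (c : ι → ℝ) (F : ι → Fin (r + 1) → ℝ)
    (v : Fin (r + 1) → ℝ) :
    (∑ k, (∑ j, c j • F j) k * v k) = ∑ j, c j * ∑ k, F j k * v k := by
  rw [Finset.sum_congr rfl fun k (_ : k ∈ Finset.univ) => show
      (∑ j, c j • F j) k * v k = ∑ j, c j * (F j k * v k) by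
    rw [Finset.sum_apply, Finset.sum_mul]
    exact Finset.sum_congr rfl fun j _ => by simp; ring]
  rw [Finset.sum_comm]
  exact Finset.sum_congr rfl fun j _ => by rw [Finset.mul_sum]

lemma Eq2_harm (h d : VV r l → ℝ) (hharm : ∀ x : VV r l, x.2.1 ≠ l → Sl r l h x = 0)
    (hbd : ∀ k, d (k, LL l) = 0) : Eq2 r l h d = 0 := by
  unfold Eq2
  rw [Finset.sum_eq_zero, neg_zero]
  rintro ⟨k, j⟩ _
  by_cases hx : j.1 = l
  · have hj : j = LL l := Fin.ext hx
    rw [hj, hbd k, zero_mul]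
  · rw [hharm (k, j) hx, mul_zero]

lemma lower (hr : 1 ≤ r) (hl : 1 ≤ l) (i : ℕ) (hi1 : 1 ≤ i) (hi2 : i ≤ r + 1) (σ : ℝ)
    (E : Submodule ℝ (VV r l → ℝ)) (hrank : Module.finrank ℝ E = i)
    (hinj : ∀ u ∈ E, (∀ x ∈ combBoundary (cG r l), u x = 0) → u = 0)
    (hray : ∀ u ∈ E, energy (cG r l) (fun _ _ => 1) u
      ≤ σ * bInner (combBoundary (cG r l)) (fun _ => 1) u u) :
    sg r l i ≤ σ := by
  have hs : ∀ s : Fin (i - 1), s.1 < r + 1 := fun s => by have := s.isLt; omega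
  obtain ⟨uE, hTuE, hune⟩ : ∃ u : E,
      (∀ s : Fin (i - 1), Bq r l (u : VV r l → ℝ) (Fj r l ⟨s.1, hs s⟩) = 0) ∧ u ≠ 0 := by
    let T : E →ₗ[ℝ] (Fin (i - 1) → ℝ) :=
      LinearMap.pi fun s => (BqL r l (Fj r l ⟨s.1, hs s⟩)).comp E.subtype
    have hnotinj : ¬ Function.Injective T := by
      intro hI
      have h1 := LinearMap.finrank_le_finrank_of_injective hI
      have h2 : Module.finrank ℝ (Fin (i - 1) → ℝ) = i - 1 := Module.finrank_fin_fun ℝ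
      rw [hrank, h2] at h1
      omega
    rw [Function.not_injective_iff] at hnotinj
    obtain ⟨a, b, hab, hne⟩ := hnotinj
    refine ⟨a - b, fun s => ?_, sub_ne_zero.mpr hne⟩
    have hz : T (a - b) = 0 := by rw [map_sub, hab, sub_self]
    have h2 := congrFun hz s
    simpa [T, LinearMap.pi_apply] using h2
  set u0 : VV r l → ℝ := (uE : VV r l → ℝ) with hu0_def
  have hu0E : u0 ∈ E := uE.2
  have hu0ne : u0 ≠ 0 := fun hc => hune (Subtype.ext hc)
  have hperp : ∀ j : Fin (r + 1), j.1 + 1 < i → Bq r l u0 (Fj r l j) = 0 := by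
    intro j hj
    have h1 := hTuE ⟨j.1, by omega⟩
    rwa [show (⟨(⟨j.1, by omega⟩ : Fin (i - 1)).1, hs _⟩ : Fin (r + 1)) = j from Fin.ext rfl] at h1
  set c : Fin (r + 1) → ℝ := fun j => Bq r l u0 (Fj r l j) / Wt r l j with hc_def
  have hcW : ∀ j, c j * Wt r l j = Bq r l u0 (Fj r l j) := fun j =>
    div_mul_cancel₀ _ (Wt_pos r l j).ne'
  set h : VV r l → ℝ := ∑ j, c j • Fj r l j with hh_def
  have hBqh : ∀ j, Bq r l h (Fj r l j) = Bq r l u0 (Fj r l j) := by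
    intro j
    rw [hh_def, show (∑ j, c j • Fj r l j) = ∑ j, c j • Fj r l ((fun x => x) j) from rfl,
      Bq_combo r l hr hl (fun x => x) (fun a b hab => hab) c j]
    exact hcW j
  set d : VV r l → ℝ := u0 - h with hd_def
  have hBd : ∀ j, Bq r l d (Fj r l j) = 0 := by
    intro j
    rw [hd_def, Bq_sub_left, hBqh j, sub_self]
  -- boundary values of d vanish
  have hd_bd : ∀ k : Fin (r + 1), d (k, LL l) = 0 := by
    set psi : Fin (r + 1) → (Fin (r + 1) → ℝ) := fun j k => Fj r l j (k, LL l) with hpsi_def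
    set dd : Fin (r + 1) → ℝ := fun k => d (k, LL l) with hdd_def
    have hpsiB : ∀ j t, (∑ k, psi j k * psi t k) = Bq r l (Fj r l j) (Fj r l t) := fun j t => rfl
    have hdot : ∀ j, (∑ k, dd k * psi j k) = 0 := fun j => hBd j
    have hli : LinearIndependent ℝ psi := by
      rw [Fintype.linearIndependent_iff]
      intro c' hc' t
      have h1 : (∑ k, (∑ j, c' j • psi j) k * psi t k) = 0 := by
        rw [hc']
        simp
      rw [dot_sum_left] at h1
      rw [Finset.sum_congr rfl (fun j (_ : j ∈ Finset.univ) => by rw [hpsiB j t])] at h1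
      rw [Finset.sum_eq_single t] at h1
      · have := Wt_pos r l t
        have h2 : c' t * Wt r l t = 0 := h1
        exact by nlinarith [h2, this]
      · intro j _ hjt
        rw [orth_Fj r l hr hl hjt, mul_zero]
      · intro hmem
        exact absurd (Finset.mem_univ t) hmem
    have hcard : Fintype.card (Fin (r + 1)) = Module.finrank ℝ (Fin (r + 1) → ℝ) := by
      rw [Module.finrank_fin_fun, Fintype.card_fin]
    let bb := basisOfLinearIndependentOfCardEqFinrank hli hcard
    have hbb : ⇑bb = psi := coe_basisOfLinearIndependentOfCardEqFinrank hli hcard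
    have hrepr : (∑ j, bb.repr dd j • psi j) = dd := by
      rw [← hbb]
      exact bb.sum_repr dd
    have hzero : (∑ k, dd k * dd k) = 0 := by
      conv_lhs => rw [show (fun k => dd k * dd k) = fun k => (∑ j, bb.repr dd j • psi j) k * dd k
        from funext fun k => by rw [hrepr]]
      rw [dot_sum_left]
      apply Finset.sum_eq_zero
      intro j _
      rw [show (∑ k, psi j k * dd k) = ∑ k, dd k * psi j k from
        Finset.sum_congr rfl fun k _ => by ring, hdot j, mul_zero]
    intro k
    have := (Finset.sum_eq_zero_iff_of_nonneg (fun k _ => mul_self_nonneg (dd k))).mp hzero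
      k (Finset.mem_univ k)
    exact mul_self_eq_zero.mp this
  -- h is harmonic in the interior
  have hharm : ∀ x : VV r l, x.2.1 ≠ l → Sl r l h x = 0 := by
    intro x hx
    have hSl : Sl r l h x = ∑ j, c j * Sl r l (Fj r l j) x := by
      rw [hh_def, map_sum, Finset.sum_apply]
      exact Finset.sum_congr rfl fun j _ => by rw [map_smul]; simp
    rw [hSl]
    apply Finset.sum_eq_zero
    intro j _
    rw [show Sl r l (Fj r l j) x = Sfun (cG r l) (ef r l (j.1 + 1)) x from rfl,
      Sfun_ef_interior r l _ hr hl x hx, mul_zero]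
  have hEq2hd : Eq2 r l h d = 0 := Eq2_harm r l h d hharm hd_bd
  have hsum : h + d = u0 := by
    funext x
    simp [hd_def]
  have hEdd : 0 ≤ Eq2 r l d d := by
    rw [← energy_eq]
    exact energy_nonneg r l d
  have hEu0 : Eq2 r l u0 u0 = Eq2 r l h h + Eq2 r l d d := by
    rw [← hsum, Eq2_symm r l (h + d) (h + d), Eq2_add_left,
      Eq2_symm r l h (h + d), Eq2_add_left, Eq2_symm r l d (h + d), Eq2_add_left,
      Eq2_symm r l d h, hEq2hd]
    ring
  have hBdw : ∀ w : VV r l → ℝ, Bq r l d w = 0 := by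
    intro w
    apply Finset.sum_eq_zero
    intro k _
    rw [hd_bd k, zero_mul]
  have hBu0 : Bq r l u0 u0 = Bq r l h h := by
    rw [← hsum, Bq_add_left, hBdw (h + d), Bq_symm r l h (h + d), Bq_add_left,
      hBdw h, Bq_symm r l h h]
    ring
  have hBh : Bq r l h h = ∑ j, c j * (c j * Wt r l j) := by
    conv_lhs => rw [hh_def]
    rw [Bq_sum_left]
    exact Finset.sum_congr rfl fun j _ => by
      rw [Bq_symm, ← hh_def, hBqh j, ← hcW j]
  have hEh : Eq2 r l h h = ∑ j, c j * (sg r l (j.1 + 1) * (c j * Wt r l j)) := by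
    conv_lhs => rw [hh_def]
    rw [Eq2_sum_left]
    refine Finset.sum_congr rfl fun j _ => ?_
    rw [eig_Fj r l hr hl j _, Bq_symm, ← hh_def, hBqh j, ← hcW j]
  have hge : sg r l i * Bq r l u0 u0 ≤ Eq2 r l u0 u0 := by
    rw [hEu0, hBu0, hBh, hEh, Finset.mul_sum]
    have hterm : ∀ j : Fin (r + 1),
        sg r l i * (c j * (c j * Wt r l j)) ≤ c j * (sg r l (j.1 + 1) * (c j * Wt r l j)) := by
      intro j
      by_cases hj : j.1 + 1 < i
      · have : c j = 0 := by rw [hc_def]; simp [hperp j hj]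
        rw [this]; simp
      · have hmono : sg r l i ≤ sg r l (j.1 + 1) :=
          sg_mono r l hi1 (by omega) (by have := j.isLt; omega)
        have hW := Wt_pos r l j
        have key := mul_le_mul_of_nonneg_right hmono
          (mul_nonneg (mul_self_nonneg (c j)) hW.le)
        nlinarith [key]
    have hsum_le : (∑ j, sg r l i * (c j * (c j * Wt r l j)))
        ≤ ∑ j, c j * (sg r l (j.1 + 1) * (c j * Wt r l j)) :=
      Finset.sum_le_sum fun j _ => hterm j
    linarith [hsum_le, hEdd]
  have hupper : Eq2 r l u0 u0 ≤ σ * Bq r l u0 u0 := by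
    have := hray u0 hu0E
    rwa [energy_eq, bInner_eq r l hr hl] at this
  have hBpos : 0 < Bq r l u0 u0 := by
    have hxB : ¬ (∀ x ∈ combBoundary (cG r l), u0 x = 0) := fun hc => hu0ne (hinj u0 hu0E hc)
    push_neg at hxB
    obtain ⟨x, hxmem, hxne⟩ := hxB
    rw [bnd_set r l hr hl] at hxmem
    have hx2 : x.2 = LL l := Fin.ext hxmem
    have hxeq : x = (x.1, LL l) := by rw [← hx2]
    apply Finset.sum_pos' (fun k _ => mul_self_nonneg _)
    refine ⟨x.1, Finset.mem_univ _, ?_⟩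
    rw [← hxeq]
    exact mul_self_pos.mpr hxne
  have hfinal : Bq r l u0 u0 * sg r l i ≤ Bq r l u0 u0 * σ := by
    rw [mul_comm (Bq r l u0 u0) (sg r l i), mul_comm (Bq r l u0 u0) σ]
    exact le_trans hge hupper
  exact le_of_mul_le_mul_left hfinal hBpos

end CombLemma

/-- **Lemma 5.7.** For `r, l ≥ 1`, the Steklov eigenvalues of the regular comb
`Comb(r;l)` are `σ_i = μ_i/(1 + μ_i·l)` for `i = 1,…,r+1`, where
`μ_i = 2 - 2cos((i-1)π/(r+1))` are the Laplacian eigenvalues of the path of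
length `r`. -/
theorem comb_eigenvalues (r l : ℕ) (hr : 1 ≤ r) (hl : 1 ≤ l) :
    ∀ i : ℕ, 1 ≤ i → i ≤ r + 1 →
      steklov (combGraph r l) (combBoundary (combGraph r l))
          (fun _ => 1) (fun _ _ => 1) i =
        (2 - 2 * Real.cos (((i : ℝ) - 1) * Real.pi / ((r : ℝ) + 1))) /
          (1 + (2 - 2 * Real.cos (((i : ℝ) - 1) * Real.pi / ((r : ℝ) + 1))) * (l : ℝ)) := by
  intro i hi1 hi2
  have hres : steklov (combGraph r l) (combBoundary (combGraph r l))
      (fun _ => 1) (fun _ _ => 1) i = CombLemma.sg r l i := by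
    unfold steklov
    rw [← CombLemma.cG_eq]
    have hmem : CombLemma.sg r l i ∈ {σ : ℝ |
        ∃ E : Submodule ℝ (CombLemma.VV r l → ℝ), Module.finrank ℝ E = i ∧
        (∀ u ∈ E, (∀ x ∈ combBoundary (CombLemma.cG r l), u x = 0) → u = 0) ∧
        ∀ u ∈ E, energy (CombLemma.cG r l) (fun _ _ => 1) u
          ≤ CombLemma.sg r l i * bInner (combBoundary (CombLemma.cG r l)) (fun _ => 1) u u} := by
      obtain ⟨E, h1, h2, h3⟩ := CombLemma.upper r l hr hl i hi1 hi2
      exact ⟨E, h1, h2, h3⟩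
    have hlb : ∀ σ ∈ {σ : ℝ |
        ∃ E : Submodule ℝ (CombLemma.VV r l → ℝ), Module.finrank ℝ E = i ∧
        (∀ u ∈ E, (∀ x ∈ combBoundary (CombLemma.cG r l), u x = 0) → u = 0) ∧
        ∀ u ∈ E, energy (CombLemma.cG r l) (fun _ _ => 1) u
          ≤ σ * bInner (combBoundary (CombLemma.cG r l)) (fun _ => 1) u u},
        CombLemma.sg r l i ≤ σ := by
      rintro σ ⟨E, h1, h2, h3⟩
      exact CombLemma.lower r l hr hl i hi1 hi2 σ E h1 h2 h3
    exact le_antisymm (csInf_le ⟨CombLemma.sg r l i, hlb⟩ hmem) (le_csInf ⟨_, hmem⟩ hlb)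
  rw [hres]
  rfl
end
end
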